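/- arXiv:1807.07645 — 8 statements merged into one kernel-verified Lean document; each statement's English description precedes it below -/
import Mathlib

section
/- For any real p ∈ [0,1] and nonnegative integers T and w, we have p^w · C(T, w) ≥ C(⌊pT⌋, w), where C(a,b) denotes the binomial coefficient. -/
/-- For any real `p ∈ [0,1]` and naturals `T`, `w`:
`p^w * C(T,w) ≥ C(⌊p·T⌋, w)`. -/
theorem stmt0 (p : ℝ) (hp0 : 0 ≤ p) (hp1 : p ≤ 1) (T w : ℕ) :
    ((Nat.floor (p * T)).choose w : ℝ) ≤ p ^ w * (T.choose w : ℝ) := by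
  set m := Nat.floor (p * T) with hm
  have hmpT : (m : ℝ) ≤ p * T := Nat.floor_le (by positivity)
  have key : ((m.descFactorial w : ℕ) : ℝ) ≤ p ^ w * (T.descFactorial w : ℝ) := by
    rw [Nat.descFactorial_eq_prod_range, Nat.descFactorial_eq_prod_range]
    push_cast
    have hpw : p ^ w = ∏ _i ∈ Finset.range w, p := by simp
    rw [hpw, ← Finset.prod_mul_distrib]
    apply Finset.prod_le_prod
    · intro i _; positivity
    · intro i _
      rcases le_or_gt (i : ℝ) m with h | h
      · have hiT : (i : ℕ) ≤ T := by
          have : (m : ℝ) ≤ T := hmpT.trans (by nlinarith [Nat.cast_nonneg (α := ℝ) T])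
          exact_mod_cast (Nat.cast_le.mp (le_trans (by exact_mod_cast h) this))
        rw [Nat.cast_sub (by exact_mod_cast h), Nat.cast_sub hiT]
        nlinarith [Nat.cast_nonneg (α := ℝ) i]
      · have : m - i = 0 := Nat.sub_eq_zero_of_le (by exact_mod_cast h.le)
        rw [this]
        have : (0:ℝ) ≤ (T - i : ℕ) := Nat.cast_nonneg _
        push_cast
        positivity
  have h1 := Nat.descFactorial_eq_factorial_mul_choose m w
  have h2 := Nat.descFactorial_eq_factorial_mul_choose T w
  have hw : (0:ℝ) < (w.factorial : ℝ) := by exact_mod_cast w.factorial_pos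
  rw [h1, h2] at key
  push_cast at key
  nlinarith [key]
end

section
/- Let μ be a probability distribution on a finite set, V a finite index set, and Φ: μ^V → ℝ. For v ∈ V and values u,u', define the derivative D_{v,u,u'}Φ as the difference of Φ with coordinate v set to u versus u'. Suppose χ: V → {1,…,k} is a coloring such that whenever χ(v) = χ(w) with v ≠ w, the function D_{v,u,u'}Φ does not depend on coordinate w for all u,u'. Then the sequential greedy procedure—processing colors 1,…,k in order, with all vertices of color i simultaneously and independently choosing values ρ_v minimizing E[Φ | R_v = ρ_v] given previously fixed coordinates—produces an assignment ρ ∈ μ^V with Φ(ρ) ≤ E[Φ(R)] where R has i.i.d. coordinates with law μ. -/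
open Finset

section Aux
variable {α : Type*} [Fintype α] {V : Type*} [Fintype V] [DecidableEq V]

/-- set coordinates in `s` to `ρ`. -/
def multiUpd (ρ : V → α) (s : Finset V) (y : V → α) : V → α :=
  fun w => if w ∈ s then ρ w else y w

lemma multiUpd_empty (ρ : V → α) (y : V → α) : multiUpd ρ ∅ y = y := by
  funext w; simp [multiUpd]

lemma multiUpd_insert (ρ : V → α) (a : V) (s : Finset V) (y : V → α) :
    multiUpd ρ (insert a s) y = Function.update (multiUpd ρ s y) a (ρ a) := by
  funext w
  by_cases h : w = a
  · subst h; simp [multiUpd]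
  · simp [multiUpd, Function.update, h]

lemma multiUpd_apply_notMem (ρ : V → α) {s : Finset V} {a : V} (ha : a ∉ s) (y : V → α) :
    multiUpd ρ s y a = y a := by
  simp [multiUpd, ha]

lemma derandDerivInv (Φ : (V → α) → ℝ) (ρ : V → α) (a : V) (t : Finset V)
    (h : ∀ w ∈ t, ∀ (u u' : α) (x : V → α) (b : α),
      Φ (Function.update (Function.update x w b) a u) -
          Φ (Function.update (Function.update x w b) a u') =
        Φ (Function.update x a u) - Φ (Function.update x a u'))
    (u u' : α) (y : V → α) :
    Φ (Function.update (multiUpd ρ t y) a u) - Φ (Function.update (multiUpd ρ t y) a u') =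
      Φ (Function.update y a u) - Φ (Function.update y a u') := by
  induction t using Finset.induction with
  | empty => rw [multiUpd_empty]
  | @insert w s _hw ih =>
    rw [multiUpd_insert, h w (mem_insert_self w s) u u' (multiUpd ρ s y) (ρ w)]
    exact ih (fun w' hw' => h w' (mem_insert_of_mem hw'))

lemma derandTelescope (Φ : (V → α) → ℝ) (ρ : V → α) (s : Finset V)
    (h : ∀ v ∈ s, ∀ w ∈ s, v ≠ w → ∀ (u u' : α) (x : V → α) (b : α),
      Φ (Function.update (Function.update x w b) v u) -
          Φ (Function.update (Function.update x w b) v u') =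
        Φ (Function.update x v u) - Φ (Function.update x v u'))
    (y : V → α) :
    Φ (multiUpd ρ s y) - Φ y = ∑ v ∈ s, (Φ (Function.update y v (ρ v)) - Φ y) := by
  induction s using Finset.induction with
  | empty => rw [multiUpd_empty]; simp
  | @insert a t ha ih =>
    have h' : ∀ v ∈ t, ∀ w ∈ t, v ≠ w → ∀ (u u' : α) (x : V → α) (b : α),
        Φ (Function.update (Function.update x w b) v u) -
            Φ (Function.update (Function.update x w b) v u') =
          Φ (Function.update x v u) - Φ (Function.update x v u') :=
      fun v hv w hw => h v (mem_insert_of_mem hv) w (mem_insert_of_mem hw)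
    have hstep : Φ (multiUpd ρ (insert a t) y) - Φ (multiUpd ρ t y) =
        Φ (Function.update y a (ρ a)) - Φ y := by
      have h1 : Φ (multiUpd ρ (insert a t) y) - Φ (multiUpd ρ t y) =
          Φ (Function.update (multiUpd ρ t y) a (ρ a)) -
            Φ (Function.update (multiUpd ρ t y) a (y a)) := by
        rw [multiUpd_insert]
        congr 1
        rw [← multiUpd_apply_notMem ρ ha y, Function.update_eq_self]
      rw [h1, derandDerivInv Φ ρ a t ?hh (ρ a) (y a) y]
      · rw [Function.update_eq_self]
      case hh =>
        intro w hw
        exact h a (mem_insert_self a t) w (mem_insert_of_mem hw)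
          (fun hh => ha (hh ▸ hw))
    rw [Finset.sum_insert ha, ← ih h', ← hstep]
    ring

lemma fubini (μ : α → ℝ) (hμ1 : ∑ x, μ x = 1) (H : (V → α) → ℝ) (v : V) :
    ∑ x : V → α, (∏ w, μ (x w)) * H x =
      ∑ u, μ u * ∑ x : V → α, (∏ w, μ (x w)) * H (Function.update x v u) := by
  have hinv : Function.LeftInverse (fun p : (V → α) × α => (Function.update p.1 v p.2, p.1 v))
      (fun p : (V → α) × α => (Function.update p.1 v p.2, p.1 v)) := by
    intro p
    refine Prod.ext ?_ (by simp)
    funext w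
    by_cases h : w = v <;> simp [Function.update, h]
  have key : ∀ (x : V → α) (u : α),
      μ (x v) * ((∏ w, μ (Function.update x v u w)) * H (Function.update x v u))
        = μ u * ((∏ w, μ (x w)) * H (Function.update x v u)) := by
    intro x u
    have h1 : (∏ w, μ (Function.update x v u w)) =
        μ u * ∏ w ∈ Finset.univ \ {v}, μ (x w) := by
      have : (fun w => μ (Function.update x v u w)) =
          Function.update (fun w => μ (x w)) v (μ u) := by
        funext w; by_cases h : w = v <;> simp [Function.update, h]
      rw [this]
      exact Finset.prod_update_of_mem (mem_univ v) _ _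
    have h2 : (∏ w, μ (x w)) = μ (x v) * ∏ w ∈ Finset.univ \ {v}, μ (x w) :=
      Finset.prod_eq_mul_prod_sdiff_singleton_of_mem (mem_univ v) _
    rw [h1, h2]; ring
  calc ∑ x : V → α, (∏ w, μ (x w)) * H x
      = (∑ u, μ u) * ∑ x : V → α, (∏ w, μ (x w)) * H x := by rw [hμ1, one_mul]
    _ = ∑ p : (V → α) × α, μ p.2 * ((∏ w, μ (p.1 w)) * H p.1) := by
        rw [Finset.sum_mul_sum, Fintype.sum_prod_type]
        rw [Finset.sum_comm]
    _ = ∑ p : (V → α) × α, μ (p.1 v) *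
          ((∏ w, μ (Function.update p.1 v p.2 w)) * H (Function.update p.1 v p.2)) := by
        rw [← Equiv.sum_comp
          (⟨fun p => (Function.update p.1 v p.2, p.1 v),
            fun p => (Function.update p.1 v p.2, p.1 v), hinv, hinv⟩ :
            ((V → α) × α) ≃ ((V → α) × α))
          (fun p : (V → α) × α => μ p.2 * ((∏ w, μ (p.1 w)) * H p.1))]
        rfl
    _ = ∑ p : (V → α) × α, μ p.2 * ((∏ w, μ (p.1 w)) * H (Function.update p.1 v p.2)) := by
        exact Finset.sum_congr rfl fun p _ => key p.1 p.2
    _ = ∑ u, μ u * ∑ x : V → α, (∏ w, μ (x w)) * H (Function.update x v u) := by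
        rw [Fintype.sum_prod_type]
        rw [Finset.sum_comm]
        exact Finset.sum_congr rfl fun u _ => by rw [Finset.mul_sum]

end Aux

/-- Derandomization via (possibly non-proper) vertex colorings.  Let `μ` be a probability
weight on a finite set `α`, `V` a finite index set, and `Φ : (V → α) → ℝ`.  Suppose the
coloring `χ` is such that for any two distinct same-colored `v, w`, the derivative
`D_{v,u,u'}Φ` does not depend on coordinate `w`.  If `ρ` is produced by the sequential
greedy procedure — i.e. for every `v`, the value `ρ v` minimizes the conditional
expectation of `Φ` when the coordinates of colors `< χ v` are fixed to `ρ` and all other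
coordinates (besides `v`) are random — then `Φ(ρ) ≤ E[Φ(R)]`. -/
theorem stmt10 {α : Type*} [Fintype α] {V : Type*} [Fintype V] [DecidableEq V]
    (μ : α → ℝ) (hμ0 : ∀ x, 0 ≤ μ x) (hμ1 : ∑ x, μ x = 1)
    (Φ : (V → α) → ℝ) (k : ℕ) (χ : V → Fin k)
    (huncorr : ∀ v w : V, v ≠ w → χ v = χ w → ∀ (u u' : α) (x : V → α) (b : α),
      Φ (Function.update (Function.update x w b) v u) -
          Φ (Function.update (Function.update x w b) v u') =
        Φ (Function.update x v u) - Φ (Function.update x v u'))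
    (ρ : V → α)
    (hgreedy : ∀ v : V, ∀ u : α,
      (∑ x : V → α, (∏ w, μ (x w)) *
          Φ (fun w => if χ w < χ v then ρ w else if w = v then ρ v else x w)) ≤
        ∑ x : V → α, (∏ w, μ (x w)) *
          Φ (fun w => if χ w < χ v then ρ w else if w = v then u else x w)) :
    Φ ρ ≤ ∑ x : V → α, (∏ w, μ (x w)) * Φ x := by
  classical
  have hP0 : ∀ x : V → α, 0 ≤ ∏ w, μ (x w) := fun x => Finset.prod_nonneg fun w _ => hμ0 _
  have hP1 : ∑ x : V → α, ∏ w, μ (x w) = 1 := by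
    rw [← Fintype.piFinset_univ, Finset.sum_prod_piFinset]
    simp [hμ1]
  set G : ℕ → ℝ := fun i =>
    ∑ x : V → α, (∏ w, μ (x w)) * Φ (fun w => if (χ w : ℕ) < i then ρ w else x w) with hG
  have hG0 : G 0 = ∑ x : V → α, (∏ w, μ (x w)) * Φ x := by simp [hG]
  have hGk : G k = Φ ρ := by
    have hlt : ∀ w : V, (χ w : ℕ) < k := fun w => (χ w).isLt
    simp only [hG, hlt, if_true]
    rw [← Finset.sum_mul, hP1, one_mul]
  -- the key step
  have hstep : ∀ i : ℕ, G (i + 1) ≤ G i := by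
    intro i
    set S : Finset V := Finset.univ.filter (fun v => (χ v : ℕ) = i) with hS
    have hmem : ∀ v, v ∈ S ↔ (χ v : ℕ) = i := by
      intro v; simp [hS]
    -- pointwise rewriting of the (i+1)-th stage
    have hpt : ∀ x : V → α,
        (fun w => if (χ w : ℕ) < i + 1 then ρ w else x w) =
          multiUpd ρ S (fun w => if (χ w : ℕ) < i then ρ w else x w) := by
      intro x; funext w
      by_cases h1 : w ∈ S
      · have := (hmem w).1 h1
        simp [multiUpd, h1, this]
      · have h2 : (χ w : ℕ) ≠ i := fun hh => h1 ((hmem w).2 hh)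
        by_cases h3 : (χ w : ℕ) < i
        · simp [multiUpd, h1, h3, Nat.lt_succ_of_lt h3]
        · have h4 : ¬ (χ w : ℕ) < i + 1 := by omega
          simp [multiUpd, h1, h3, h4]
    -- uncorrelated within the color class
    have hcol : ∀ v ∈ S, ∀ w ∈ S, v ≠ w → ∀ (u u' : α) (x : V → α) (b : α),
        Φ (Function.update (Function.update x w b) v u) -
            Φ (Function.update (Function.update x w b) v u') =
          Φ (Function.update x v u) - Φ (Function.update x v u') := by
      intro v hv w hw hvw
      exact huncorr v w hvw (Fin.ext (((hmem v).1 hv).trans (((hmem w).1 hw)).symm))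
    -- per-vertex frozen value
    have hAv : ∀ v ∈ S,
        (∑ x : V → α, (∏ w, μ (x w)) *
          Φ (Function.update (fun w => if (χ w : ℕ) < i then ρ w else x w) v (ρ v))) ≤ G i := by
      intro v hv
      have hvi : (χ v : ℕ) = i := (hmem v).1 hv
      have hup : ∀ (x : V → α) (u : α),
          Function.update (fun w => if (χ w : ℕ) < i then ρ w else x w) v u =
          fun w => if χ w < χ v then ρ w else if w = v then u else x w := by
        intro x u; funext w
        by_cases h1 : w = v
        · subst h1
          simp [Function.update, lt_irrefl]
        · have : (χ w < χ v) ↔ ((χ w : ℕ) < i) := by rw [Fin.lt_def, hvi]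
          simp [Function.update, h1, this]
      have hfub := fubini μ hμ1
        (fun x => Φ (fun w => if (χ w : ℕ) < i then ρ w else x w)) v
      have hGieq : G i = ∑ u, μ u * ∑ x : V → α, (∏ w, μ (x w)) *
          Φ (fun w => if χ w < χ v then ρ w else if w = v then u else x w) := by
        simp only [hG]
        rw [hfub]
        refine Finset.sum_congr rfl fun u _ => ?_
        congr 1
        refine Finset.sum_congr rfl fun x _ => ?_
        congr 1
        have heq : (fun w => if (χ w : ℕ) < i then ρ w else Function.update x v u w) =
            Function.update (fun w => if (χ w : ℕ) < i then ρ w else x w) v u := by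
          funext w
          by_cases h1 : w = v
          · subst h1; simp [Function.update, hvi]
          · simp [Function.update, h1]
        rw [heq, hup]
      calc (∑ x : V → α, (∏ w, μ (x w)) *
              Φ (Function.update (fun w => if (χ w : ℕ) < i then ρ w else x w) v (ρ v)))
          = (∑ u, μ u) * (∑ x : V → α, (∏ w, μ (x w)) *
              Φ (Function.update (fun w => if (χ w : ℕ) < i then ρ w else x w) v (ρ v))) := by
            rw [hμ1, one_mul]
        _ = ∑ u, μ u * (∑ x : V → α, (∏ w, μ (x w)) *
              Φ (Function.update (fun w => if (χ w : ℕ) < i then ρ w else x w) v (ρ v))) := by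
            rw [Finset.sum_mul]
        _ ≤ ∑ u, μ u * ∑ x : V → α, (∏ w, μ (x w)) *
              Φ (fun w => if χ w < χ v then ρ w else if w = v then u else x w) := by
            refine Finset.sum_le_sum fun u _ => ?_
            refine mul_le_mul_of_nonneg_left ?_ (hμ0 u)
            calc ∑ x : V → α, (∏ w, μ (x w)) *
                    Φ (Function.update (fun w => if (χ w : ℕ) < i then ρ w else x w) v (ρ v))
                = ∑ x : V → α, (∏ w, μ (x w)) *
                    Φ (fun w => if χ w < χ v then ρ w else if w = v then ρ v else x w) :=
                  Finset.sum_congr rfl fun x _ => by rw [hup]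
              _ ≤ _ := hgreedy v u
        _ = G i := hGieq.symm
    -- assemble
    have hdiff : G (i + 1) - G i = ∑ v ∈ S,
        ((∑ x : V → α, (∏ w, μ (x w)) *
          Φ (Function.update (fun w => if (χ w : ℕ) < i then ρ w else x w) v (ρ v))) - G i) := by
      have h1 : G (i + 1) - G i = ∑ x : V → α, (∏ w, μ (x w)) *
          (Φ (multiUpd ρ S (fun w => if (χ w : ℕ) < i then ρ w else x w)) -
            Φ (fun w => if (χ w : ℕ) < i then ρ w else x w)) := by
        simp only [hG, mul_sub]
        rw [Finset.sum_sub_distrib]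
        congr 1
        exact Finset.sum_congr rfl fun x _ => by rw [hpt x]
      rw [h1]
      calc ∑ x : V → α, (∏ w, μ (x w)) *
              (Φ (multiUpd ρ S (fun w => if (χ w : ℕ) < i then ρ w else x w)) -
                Φ (fun w => if (χ w : ℕ) < i then ρ w else x w))
          = ∑ x : V → α, ∑ v ∈ S, (∏ w, μ (x w)) *
              (Φ (Function.update (fun w => if (χ w : ℕ) < i then ρ w else x w) v (ρ v)) -
                Φ (fun w => if (χ w : ℕ) < i then ρ w else x w)) := by
            refine Finset.sum_congr rfl fun x _ => ?_
            rw [derandTelescope Φ ρ S hcol (fun w => if (χ w : ℕ) < i then ρ w else x w),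
              Finset.mul_sum]
        _ = ∑ v ∈ S, ∑ x : V → α, (∏ w, μ (x w)) *
              (Φ (Function.update (fun w => if (χ w : ℕ) < i then ρ w else x w) v (ρ v)) -
                Φ (fun w => if (χ w : ℕ) < i then ρ w else x w)) :=
            Finset.sum_comm
        _ = ∑ v ∈ S, ((∑ x : V → α, (∏ w, μ (x w)) *
              Φ (Function.update (fun w => if (χ w : ℕ) < i then ρ w else x w) v (ρ v))) - G i) := by
            refine Finset.sum_congr rfl fun v _ => ?_
            simp only [mul_sub]
            rw [Finset.sum_sub_distrib]
    have hle : G (i + 1) - G i ≤ 0 := by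
      rw [hdiff]
      exact Finset.sum_nonpos fun v hv => sub_nonpos.mpr (hAv v hv)
    linarith
  have hmono : ∀ n : ℕ, G n ≤ G 0 := by
    intro n
    induction n with
    | zero => exact le_refl _
    | succ m ih => exact (hstep m).trans ih
  rw [← hG0, ← hGk]
  exact hmono k
end

section
/- Let X_1,…,X_m be independent Bernoulli(p) random variables with sum Z and mean μ = pm. For any integer w with 1 ≤ w ≤ t and t > μ, Pr(Z ≥ t) ≤ C(m,w)·p^w / C(t,w); moreover when w = ⌈t − μ⌉ this bound is at most (e^ε/(1+ε)^{1+ε})^μ where t = (1+ε)μ. -/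
/-!
Markov's inequality applied to the nonnegative variable `C(Z, w)`, which is at least `C(t, w)`
on the event `Z ≥ t`, gives the first bound, because `C(Z, w)` counts the `w`-subsets of
successful trials and each of the `C(m, w)` subsets of size `w` succeeds with probability `p ^ w`.

For the second bound put `μ = pm` and `s = t - w`, so that `s ≤ μ < s + 1` by the choice of `w`.
Then `C(m, w) p ^ w / C(t, w) ≤ μ ^ w s! / t!`, and the Chernoff bound equals
`e ^ (t - μ) μ ^ t / t ^ t`. The comparison reduces to
`t ^ t e ^ (-t) / t! ≤ (s + 1) ^ (s + 1) e ^ (-(s + 1)) / (s + 1)! ≤ μ ^ s e ^ (-μ) / s!`: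
the first step because `n ^ n e ^ (-n) / n!` is antitone (as `(1 + 1/n) ^ n ≤ e`), the second
because `x ^ s e ^ (-x)` decreases for `x ≥ s`.
-/

open Finset Real
open scoped Nat

section Bernoulli

variable {ι R : Type*} [Fintype ι] [CommRing R]

def bernoulliWeight (p : R) (x : ι → Bool) : R := ∏ i, if x i then p else 1 - p

lemma bernoulliWeight_nonneg {p : ℝ} (hp0 : 0 ≤ p) (hp1 : p ≤ 1) (x : ι → Bool) :
    0 ≤ bernoulliWeight p x :=
  prod_nonneg fun i _ => by split_ifs <;> linarith

variable [DecidableEq ι]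

lemma sum_bernoulliWeight_of_forall_mem_eq_true (p : R) (S : Finset ι) :
    ∑ x ∈ univ.filter (fun x : ι → Bool => ∀ i ∈ S, x i = true), bernoulliWeight p x
      = p ^ #S := by
  have hpi : univ.filter (fun x : ι → Bool => ∀ i ∈ S, x i = true)
      = Fintype.piFinset (fun i => if i ∈ S then {true} else univ) := by
    ext x
    simp only [mem_filter, mem_univ, true_and, Fintype.mem_piFinset]
    refine forall_congr' fun i => ?_
    split_ifs with hi <;> simp [hi]
  rw [hpi, ← prod_const, ← Fintype.prod_ite_mem S (fun _ => p)]
  unfold bernoulliWeight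
  rw [← prod_univ_sum (f := fun _ (b : Bool) => if b then p else 1 - p)]
  refine prod_congr rfl fun i _ => ?_
  split_ifs <;> simp

lemma sum_choose_card_mul_bernoulliWeight (p : R) (w : ℕ) :
    ∑ x : ι → Bool, ((#(univ.filter fun i => x i = true)).choose w : R) * bernoulliWeight p x
      = (Fintype.card ι).choose w * p ^ w := by
  calc ∑ x : ι → Bool, ((#(univ.filter fun i => x i = true)).choose w : R) * bernoulliWeight p x
      = ∑ x : ι → Bool, ∑ _S ∈ powersetCard w (univ.filter fun i => x i = true),
          bernoulliWeight p x := by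
        simp only [sum_const, card_powersetCard, nsmul_eq_mul]
    _ = ∑ S ∈ powersetCard w univ,
          ∑ x ∈ univ.filter (fun x : ι → Bool => ∀ i ∈ S, x i = true), bernoulliWeight p x := by
        refine sum_comm' fun x S => ?_
        simp only [mem_univ, mem_powersetCard, mem_filter, true_and, subset_iff]
        tauto
    _ = (Fintype.card ι).choose w * p ^ w := by
        rw [sum_congr rfl fun S hS => (sum_bernoulliWeight_of_forall_mem_eq_true p S).trans
          (by rw [(mem_powersetCard.1 hS).2]), sum_const, card_powersetCard, card_univ,
          nsmul_eq_mul]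

end Bernoulli

lemma sum_filter_le_le_sum_choose_mul_div {α : Type*} (s : Finset α) (Z : α → ℕ) {a : α → ℝ}
    (ha : ∀ x ∈ s, 0 ≤ a x) {t w : ℕ} (hwt : w ≤ t) :
    ∑ x ∈ s.filter (fun x => t ≤ Z x), a x ≤ (∑ x ∈ s, ((Z x).choose w : ℝ) * a x) / t.choose w := by
  have hCt : (0 : ℝ) < t.choose w := by exact_mod_cast Nat.choose_pos hwt
  rw [le_div_iff₀ hCt, sum_mul]
  calc ∑ x ∈ s.filter (fun x => t ≤ Z x), a x * t.choose w
      ≤ ∑ x ∈ s.filter (fun x => t ≤ Z x), ((Z x).choose w : ℝ) * a x := by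
        refine sum_le_sum fun x hx => ?_
        rw [mul_comm]
        gcongr
        · exact ha x (mem_filter.1 hx).1
        · exact (mem_filter.1 hx).2
    _ ≤ ∑ x ∈ s, ((Z x).choose w : ℝ) * a x :=
        sum_le_sum_of_subset_of_nonneg (filter_subset _ _) fun x hx _ =>
          mul_nonneg (Nat.cast_nonneg _) (ha x hx)

lemma add_one_pow_le_exp_one_mul_pow (n : ℕ) : ((n : ℝ) + 1) ^ n ≤ exp 1 * (n : ℝ) ^ n := by
  rcases eq_or_ne n 0 with rfl | hn
  · simp
  calc ((n : ℝ) + 1) ^ n = (1 + (n : ℝ)⁻¹) ^ n * (n : ℝ) ^ n := by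
        rw [← mul_pow, add_mul, inv_mul_cancel₀ (by exact_mod_cast hn), one_mul, add_comm]
    _ ≤ exp 1 * (n : ℝ) ^ n := by gcongr; exact one_add_inv_pow_le_exp

lemma antitone_pow_self_mul_exp_neg_div_factorial :
    Antitone fun n : ℕ => (n : ℝ) ^ n * exp (-n) / n ! := by
  refine antitone_nat_of_succ_le fun n => ?_
  have hfac : (0 : ℝ) < n ! := by positivity
  rw [Nat.factorial_succ, Nat.cast_mul, div_le_div_iff₀ (by positivity) hfac]
  push_cast
  calc ((n : ℝ) + 1) ^ (n + 1) * exp (-(n + 1)) * n !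
      = (n + 1) * (n ! * exp (-n) * (exp (-1) * ((n : ℝ) + 1) ^ n)) := by
        rw [neg_add, exp_add]; ring
    _ ≤ (n + 1) * (n ! * exp (-n) * (n : ℝ) ^ n) := by
        gcongr
        rw [exp_neg, inv_mul_le_iff₀ (exp_pos 1)]
        exact add_one_pow_le_exp_one_mul_pow n
    _ = (n : ℝ) ^ n * exp (-n) * ((n + 1) * n !) := by ring

lemma pow_mul_exp_neg_le_of_le (n : ℕ) {x y : ℝ} (hx : 0 < x) (hnx : n ≤ x) (hxy : x ≤ y) :
    y ^ n * exp (-y) ≤ x ^ n * exp (-x) := by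
  have hpow : (y / x) ^ n ≤ exp (y - x) :=
    calc (y / x) ^ n = (1 + (y - x) / x) ^ n := by field_simp; ring
      _ ≤ exp ((y - x) / x) ^ n := by
          have : 0 ≤ (y - x) / x := div_nonneg (by linarith) hx.le
          gcongr
          rw [add_comm]
          exact add_one_le_exp _
      _ = exp (n * ((y - x) / x)) := by rw [exp_nat_mul]
      _ ≤ exp (y - x) := by
          gcongr
          rw [mul_div_assoc', div_le_iff₀ hx]
          nlinarith
  rw [div_pow, div_le_iff₀ (by positivity)] at hpow
  calc y ^ n * exp (-y) ≤ exp (y - x) * x ^ n * exp (-y) := by gcongr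
    _ = x ^ n * exp (-x) := by rw [mul_comm _ (x ^ n), mul_assoc, ← exp_add]; ring_nf

lemma pow_self_mul_exp_neg_div_factorial_le {s t : ℕ} {μ : ℝ} (hst : s < t) (hμ : 0 < μ)
    (hsμ : s ≤ μ) (hμs : μ ≤ s + 1) :
    (t : ℝ) ^ t * exp (-t) / t ! ≤ μ ^ s * exp (-μ) / s ! :=
  calc (t : ℝ) ^ t * exp (-t) / t !
      ≤ ((s + 1 : ℕ) : ℝ) ^ (s + 1) * exp (-(s + 1 : ℕ)) / (s + 1)! :=
        antitone_pow_self_mul_exp_neg_div_factorial hst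
    _ = ((s : ℝ) + 1) ^ s * exp (-(s + 1)) / s ! := by
        push_cast [Nat.factorial_succ]
        field_simp
        ring
    _ ≤ μ ^ s * exp (-μ) / s ! :=
        div_le_div_of_nonneg_right (pow_mul_exp_neg_le_of_le s hμ hsμ hμs) (by positivity)

lemma choose_mul_pow_div_choose_le {m t w : ℕ} {p : ℝ} (hp : 0 ≤ p) (hw : 1 ≤ w) (hwt : w ≤ t)
    (hμ : 0 < p * m) (hsμ : (t : ℝ) - w ≤ p * m) (hμs : p * m ≤ (t : ℝ) - w + 1) :
    (m.choose w : ℝ) * p ^ w / t.choose w ≤ exp (t - p * m) * (p * m) ^ t / (t : ℝ) ^ t := by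
  set μ := p * m
  have hs : ((t - w : ℕ) : ℝ) = t - w := by push_cast [Nat.cast_sub hwt]; ring
  have hkey := pow_self_mul_exp_neg_div_factorial_le (t := t) (s := t - w) (μ := μ) (by omega) hμ
    (by rw [hs]; exact hsμ) (by rw [hs]; exact hμs)
  have hnum : (m.choose w : ℝ) * p ^ w ≤ μ ^ w / w ! :=
    calc (m.choose w : ℝ) * p ^ w ≤ (m : ℝ) ^ w / w ! * p ^ w := by
          gcongr; exact Nat.choose_le_pow_div w m
      _ = μ ^ w / w ! := by rw [mul_pow]; ring
  have hμt : μ ^ t = μ ^ w * μ ^ (t - w) := by rw [← pow_add]; congr 1; omega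
  have hfac : ((t - w)! : ℝ) / t ! ≤ μ ^ (t - w) * exp (t - μ) / (t : ℝ) ^ t := by
    have ht : (0 : ℝ) < t := by exact_mod_cast (hw.trans hwt)
    rw [div_le_div_iff₀ (by positivity) (by positivity)] at hkey ⊢
    calc ((t - w)! : ℝ) * (t : ℝ) ^ t = (t : ℝ) ^ t * exp (-t) * (t - w)! * exp t := by
          rw [exp_neg]; field_simp
      _ ≤ μ ^ (t - w) * exp (-μ) * t ! * exp t := by gcongr
      _ = μ ^ (t - w) * exp (t - μ) * t ! := by rw [sub_eq_neg_add, exp_add]; ring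
  calc (m.choose w : ℝ) * p ^ w / t.choose w
      ≤ μ ^ w / w ! / (t ! / (w ! * (t - w)!)) := by
        rw [Nat.cast_choose ℝ hwt]; gcongr
    _ = μ ^ w * (((t - w)! : ℝ) / t !) := by field_simp
    _ ≤ μ ^ w * (μ ^ (t - w) * exp (t - μ) / (t : ℝ) ^ t) := by gcongr
    _ = exp (t - μ) * μ ^ t / (t : ℝ) ^ t := by rw [hμt]; ring

lemma exp_div_one_add_rpow_rpow_eq {ε μ : ℝ} {t : ℕ} (hμ : 0 < μ) (ht0 : 0 < t)
    (ht : (t : ℝ) = (1 + ε) * μ) :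
    (exp ε / (1 + ε) ^ ((1 : ℝ) + ε)) ^ μ = exp (t - μ) * μ ^ t / (t : ℝ) ^ t := by
  have hε : 1 + ε = t / μ := by rw [ht]; field_simp
  have hε0 : 0 < 1 + ε := by rw [hε]; positivity
  rw [div_rpow (exp_pos ε).le (rpow_nonneg hε0.le _), ← exp_mul, ← rpow_mul hε0.le, ← ht,
    show ε * μ = t - μ by rw [ht]; ring, hε, rpow_natCast, div_pow, div_div_eq_mul_div]

theorem stmt13_general (m t w : ℕ) (p : ℝ) (hp0 : 0 ≤ p) (hp1 : p ≤ 1)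
    (hw1 : 1 ≤ w) (hwt : w ≤ t) (hμ : p * m < t) :
    (∑ x ∈ Finset.univ.filter (fun x : Fin m → Bool =>
        t ≤ (Finset.univ.filter (fun i => x i = true)).card),
        ∏ i, (if x i then p else 1 - p))
      ≤ (m.choose w : ℝ) * p ^ w / (t.choose w : ℝ) ∧
    (∀ ε : ℝ, (t : ℝ) = (1 + ε) * (p * m) → w = Nat.ceil ((t : ℝ) - p * m) →
      (m.choose w : ℝ) * p ^ w / (t.choose w : ℝ) ≤
        (Real.exp ε / (1 + ε) ^ ((1 : ℝ) + ε)) ^ (p * m)) := by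
  refine ⟨?_, fun ε hε hw => ?_⟩
  · calc _ ≤ (∑ x : Fin m → Bool,
          ((#(univ.filter fun i => x i = true)).choose w : ℝ) * bernoulliWeight p x) / t.choose w :=
          sum_filter_le_le_sum_choose_mul_div _ _ (fun x _ => bernoulliWeight_nonneg hp0 hp1 x) hwt
      _ = _ := by rw [sum_choose_card_mul_bernoulliWeight, Fintype.card_fin]
  · have ht0 : 0 < t := hw1.trans hwt
    have hμ0 : 0 < p * m := lt_of_le_of_ne (by positivity) fun h => by
      rw [← h, mul_zero, Nat.cast_eq_zero] at hε
      omega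
    have hw_ge : (t : ℝ) - p * m ≤ w := hw ▸ Nat.le_ceil _
    have hw_lt : (w : ℝ) < t - p * m + 1 := hw ▸ Nat.ceil_lt_add_one (by linarith)
    rw [exp_div_one_add_rpow_rpow_eq hμ0 ht0 hε]
    exact choose_mul_pow_div_choose_le hp0 hw1 hwt hμ0 (by linarith) (by linarith)

/-- Schmidt–Siegel–Srinivasan: for independent Bernoulli(`p`) variables `X_1,…,X_m` with
sum `Z` and mean `μ = pm`, any integer `1 ≤ w ≤ t` with `t > μ` gives
`Pr(Z ≥ t) ≤ C(m,w)·p^w/C(t,w)`; moreover with `w = ⌈t − μ⌉` and `t = (1+ε)μ` this bound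
is at most `(e^ε/(1+ε)^{1+ε})^μ`. -/
theorem stmt13 (m t w : ℕ) (p : ℝ) (hp0 : 0 ≤ p) (hp1 : p ≤ 1)
    (hw1 : 1 ≤ w) (hwt : w ≤ t) (htm : t ≤ m) (hμ : p * m < t) :
    (∑ x ∈ Finset.univ.filter (fun x : Fin m → Bool =>
        t ≤ (Finset.univ.filter (fun i => x i = true)).card),
        ∏ i, (if x i then p else 1 - p))
      ≤ (m.choose w : ℝ) * p ^ w / (t.choose w : ℝ) ∧
    (∀ ε : ℝ, (t : ℝ) = (1 + ε) * (p * m) → w = Nat.ceil ((t : ℝ) - p * m) →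
      (m.choose w : ℝ) * p ^ w / (t.choose w : ℝ) ≤
        (Real.exp ε / (1 + ε) ^ ((1 : ℝ) + ε)) ^ (p * m)) :=
  stmt13_general m t w p hp0 hp1 hw1 hwt hμ
end

section
/- Let H = (V,E) be a hypergraph of rank r and let h: E → [0,1] be a fractional matching. Form a random edge multiset L' by including Poisson(10·h(e)·log r) independent copies of each edge e (with r ≥ 2), and let L be obtained from L' by deleting all edges incident to any vertex whose degree in L' exceeds t = 20·log r. Then E[a(L)] ≥ c·a(h)·log r for an absolute constant c > 0, for any edge-weighting a. -/
/-!
Write `λₑ = 10 hₑ log r` for the Poisson rate of edge `e`. By linearity it suffices that each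
edge keeps half of its expected multiplicity: `E[xₑ; e survives] ≥ λₑ / 2`. The edge is lost
only if some vertex `v ∈ e` has degree `D_v > t`, and the Poisson generating function gives the
exponential moment bound
`E[xₑ; D_v > t] ≤ 2^(-t) E[xₑ 2^(D_v)] = 2^(-t) · 2λₑ · exp (∑_{f ∋ v} λ_f) ≤ 2^(-t) · 2λₑ · r^10`.
A union bound over the at most `r = exp (log r)` vertices of `e` with `t = 20 log r` shows that at
most `λₑ / 2` is lost, so `c = 5` works.

Expectations are taken in `ℝ≥0∞`, where a sum over `ι → ℕ` of a product factorises without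
summability side conditions.
-/

open scoped ENNReal NNReal Nat
open Real

noncomputable def poissonP (lam : ℝ) (n : ℕ) : ℝ :=
  Real.exp (-lam) * lam ^ n / (Nat.factorial n : ℝ)

lemma poissonP_nonneg {lam : ℝ} (hlam : 0 ≤ lam) (n : ℕ) : 0 ≤ poissonP lam n := by
  unfold poissonP; positivity

lemma succ_mul_poissonP_succ (lam : ℝ) (n : ℕ) :
    (n + 1 : ℝ) * poissonP lam (n + 1) = lam * poissonP lam n := by
  unfold poissonP
  rw [Nat.factorial_succ]
  push_cast
  field_simp
  ring

lemma hasSum_poissonP_mul_pow (lam z : ℝ) :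
    HasSum (fun n ↦ poissonP lam n * z ^ n) (exp (lam * (z - 1))) := by
  have h := (NormedSpace.expSeries_div_hasSum_exp (lam * z)).mul_left (exp (-lam))
  rw [← exp_eq_exp_ℝ, ← exp_add, show -lam + lam * z = lam * (z - 1) by ring] at h
  refine h.congr_fun fun n ↦ ?_
  unfold poissonP
  ring

lemma hasSum_nat_mul_poissonP_mul_pow (lam z : ℝ) :
    HasSum (fun n : ℕ ↦ n * (poissonP lam n * z ^ n)) (lam * z * exp (lam * (z - 1))) := by
  rw [← hasSum_nat_add_iff' 1, Finset.sum_range_one, Nat.cast_zero, zero_mul, sub_zero]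
  refine ((hasSum_poissonP_mul_pow lam z).mul_left (lam * z)).congr_fun fun n ↦ ?_
  push_cast
  linear_combination z ^ (n + 1) * succ_mul_poissonP_succ lam n

lemma tsum_ofReal_poissonP_mul_pow {lam : ℝ} (hlam : 0 ≤ lam) (z : ℝ≥0) :
    ∑' n, ENNReal.ofReal (poissonP lam n) * (z : ℝ≥0∞) ^ n =
      ENNReal.ofReal (exp (lam * (z - 1))) := by
  rw [← (hasSum_poissonP_mul_pow lam z).tsum_eq,
    ENNReal.ofReal_tsum_of_nonneg (fun n ↦ by have := poissonP_nonneg hlam n; positivity)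
      (hasSum_poissonP_mul_pow lam z).summable]
  refine tsum_congr fun n ↦ ?_
  rw [ENNReal.ofReal_mul (poissonP_nonneg hlam n), ENNReal.ofReal_pow z.coe_nonneg,
    ENNReal.ofReal_coe_nnreal]

lemma tsum_ofReal_poissonP_mul_nat_mul_pow {lam : ℝ} (hlam : 0 ≤ lam) (z : ℝ≥0) :
    ∑' n : ℕ, ENNReal.ofReal (poissonP lam n) * (n * (z : ℝ≥0∞) ^ n) =
      ENNReal.ofReal (lam * z * exp (lam * (z - 1))) := by
  rw [← (hasSum_nat_mul_poissonP_mul_pow lam z).tsum_eq,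
    ENNReal.ofReal_tsum_of_nonneg (fun n ↦ by have := poissonP_nonneg hlam n; positivity)
      (hasSum_nat_mul_poissonP_mul_pow lam z).summable]
  refine tsum_congr fun n ↦ ?_
  rw [ENNReal.ofReal_mul (Nat.cast_nonneg _), ENNReal.ofReal_mul (poissonP_nonneg hlam n),
    ENNReal.ofReal_pow z.coe_nonneg, ENNReal.ofReal_coe_nnreal, ENNReal.ofReal_natCast]
  ring

theorem ENNReal.tsum_pi_prod {ι κ : Type*} [Fintype ι] (g : ι → κ → ℝ≥0∞) :
    ∑' x : ι → κ, ∏ i, g i (x i) = ∏ i, ∑' k, g i k := by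
  refine Fintype.induction_empty_option
    (P := fun α _ ↦ ∀ g : α → κ → ℝ≥0∞, ∑' x : α → κ, ∏ i, g i (x i) = ∏ i, ∑' k, g i k)
    ?_ ?_ ?_ ι g
  · intro α β _ e ih g
    let := Fintype.ofEquiv β e.symm
    rw [← (e.arrowCongr (Equiv.refl κ)).tsum_eq]
    simp_rw [← e.prod_comp, Equiv.arrowCongr_apply, Equiv.coe_refl, Function.comp_apply, id,
      Equiv.symm_apply_apply]
    exact ih _
  · intro g
    simp
  · intro α _ ih g
    rw [← (Equiv.piOptionEquivProd (β := fun _ ↦ κ)).symm.tsum_eq]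
    simp [Fintype.prod_option, ENNReal.tsum_prod', ENNReal.tsum_mul_left, ENNReal.tsum_mul_right,
      ih]

section PoissonExpectation

variable {ι : Type*} [Fintype ι] (lam : ι → ℝ)

noncomputable def poissonExpect (g : (ι → ℕ) → ℝ≥0∞) : ℝ≥0∞ :=
  ∑' x, (∏ i, ENNReal.ofReal (poissonP (lam i) (x i))) * g x

variable {lam}

lemma poissonExpect_mono {f g : (ι → ℕ) → ℝ≥0∞} (hfg : ∀ x, f x ≤ g x) :
    poissonExpect lam f ≤ poissonExpect lam g :=
  ENNReal.tsum_le_tsum fun x ↦ mul_le_mul_right (hfg x) _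

lemma poissonExpect_add (f g : (ι → ℕ) → ℝ≥0∞) :
    poissonExpect lam (fun x ↦ f x + g x) = poissonExpect lam f + poissonExpect lam g := by
  simp only [poissonExpect, mul_add, ENNReal.tsum_add]

lemma poissonExpect_const_mul (c : ℝ≥0∞) (g : (ι → ℕ) → ℝ≥0∞) :
    poissonExpect lam (fun x ↦ c * g x) = c * poissonExpect lam g := by
  simp only [poissonExpect, mul_left_comm _ c, ENNReal.tsum_mul_left]

lemma poissonExpect_sum {α : Type*} (s : Finset α) (g : α → (ι → ℕ) → ℝ≥0∞) :
    poissonExpect lam (fun x ↦ ∑ j ∈ s, g j x) = ∑ j ∈ s, poissonExpect lam (g j) := by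
  simp only [poissonExpect, Finset.mul_sum]
  exact Summable.tsum_finsetSum fun _ _ ↦ ENNReal.summable

theorem poissonExpect_count_mul_prod_pow (hlam : ∀ i, 0 ≤ lam i) (z : ι → ℝ≥0) (e : ι) :
    poissonExpect lam (fun x ↦ x e * ∏ i, (z i : ℝ≥0∞) ^ x i) =
      ENNReal.ofReal (lam e * z e * exp (∑ i, lam i * (z i - 1))) := by
  classical
  have hsplit : ∀ x : ι → ℕ, (∏ i, ENNReal.ofReal (poissonP (lam i) (x i))) *
      (x e * ∏ i, (z i : ℝ≥0∞) ^ x i) = ∏ i, ENNReal.ofReal (poissonP (lam i) (x i)) *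
        ((if i = e then (x i : ℝ≥0∞) else 1) * (z i : ℝ≥0∞) ^ x i) := by
    intro x
    rw [Finset.prod_mul_distrib, Finset.prod_mul_distrib, Finset.prod_ite_eq',
      if_pos (Finset.mem_univ e)]
  have hcoord : ∀ i, ∑' n : ℕ, ENNReal.ofReal (poissonP (lam i) n) *
      ((if i = e then (n : ℝ≥0∞) else 1) * (z i : ℝ≥0∞) ^ n) =
        (if i = e then ENNReal.ofReal (lam e * z e) else 1) *
          ENNReal.ofReal (exp (lam i * (z i - 1))) := by
    intro i
    split_ifs with hi
    · subst hi
      rw [tsum_ofReal_poissonP_mul_nat_mul_pow (hlam i),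
        ENNReal.ofReal_mul (mul_nonneg (hlam i) (z i).coe_nonneg)]
    · simp only [one_mul]
      exact tsum_ofReal_poissonP_mul_pow (hlam i) (z i)
  rw [poissonExpect, tsum_congr hsplit, ENNReal.tsum_pi_prod (fun i n ↦ ENNReal.ofReal
      (poissonP (lam i) n) * ((if i = e then (n : ℝ≥0∞) else 1) * (z i : ℝ≥0∞) ^ n)),
    Finset.prod_congr rfl fun i _ ↦ hcoord i,
    Finset.prod_mul_distrib, Finset.prod_ite_eq', if_pos (Finset.mem_univ e),
    ← ENNReal.ofReal_prod_of_nonneg fun _ _ ↦ (exp_pos _).le, ← exp_sum,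
    ← ENNReal.ofReal_mul (mul_nonneg (hlam e) (z e).coe_nonneg)]

theorem poissonExpect_count (hlam : ∀ i, 0 ≤ lam i) (e : ι) :
    poissonExpect lam (fun x ↦ x e) = ENNReal.ofReal (lam e) := by
  simpa using poissonExpect_count_mul_prod_pow hlam 1 e

theorem poissonExpect_count_mul_two_pow_sum (hlam : ∀ i, 0 ≤ lam i) {s : Finset ι} {e : ι}
    (he : e ∈ s) :
    poissonExpect lam (fun x ↦ x e * 2 ^ ∑ i ∈ s, x i) =
      ENNReal.ofReal (2 * lam e * exp (∑ i ∈ s, lam i)) := by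
  classical
  have hpow : ∀ x : ι → ℕ, ∏ i, (((if i ∈ s then 2 else 1 : ℝ≥0)) : ℝ≥0∞) ^ x i =
      2 ^ ∑ i ∈ s, x i := by
    intro x
    simp only [apply_ite, ENNReal.coe_ofNat, ENNReal.coe_one, ite_pow, one_pow,
      Fintype.prod_ite_mem, Finset.prod_pow_eq_pow_sum]
  have hexp : ∑ i, lam i * (((if i ∈ s then 2 else 1 : ℝ≥0) : ℝ) - 1) = ∑ i ∈ s, lam i := by
    rw [← Fintype.sum_ite_mem s lam]
    refine Finset.sum_congr rfl fun i _ ↦ ?_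
    split_ifs <;> norm_num
  have := poissonExpect_count_mul_prod_pow hlam (fun i ↦ if i ∈ s then 2 else 1) e
  simp only [hpow, hexp, if_pos he] at this
  rw [this]
  congr 2
  push_cast
  ring

lemma poissonExpect_ite_count_le (hlam : ∀ i, 0 ≤ lam i) (p : (ι → ℕ) → Prop) [DecidablePred p]
    (e : ι) :
    poissonExpect lam (fun x ↦ if p x then (x e : ℝ≥0∞) else 0) ≤ ENNReal.ofReal (lam e) :=
  (poissonExpect_mono fun x ↦ by split_ifs <;> simp).trans_eq (poissonExpect_count hlam e)

lemma one_le_ofReal_two_rpow_neg_mul_two_pow {t : ℝ} {n : ℕ} (h : t ≤ n) :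
    1 ≤ ENNReal.ofReal (2 ^ (-t)) * 2 ^ n := by
  rw [← ENNReal.ofReal_ofNat 2, ← ENNReal.ofReal_pow zero_le_two,
    ← ENNReal.ofReal_mul (by positivity), ENNReal.one_le_ofReal, ← rpow_natCast,
    ← rpow_add two_pos]
  exact one_le_rpow one_le_two (by linarith)

theorem poissonExpect_count_mul_indicator_le (hlam : ∀ i, 0 ≤ lam i) {s : Finset ι} {e : ι}
    (he : e ∈ s) (t : ℝ) :
    poissonExpect lam (fun x ↦ if t < ((∑ i ∈ s, x i : ℕ) : ℝ) then (x e : ℝ≥0∞) else 0) ≤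
      ENNReal.ofReal (2 ^ (-t) * (2 * lam e * exp (∑ i ∈ s, lam i))) := by
  calc _ ≤ poissonExpect lam (fun x ↦ ENNReal.ofReal (2 ^ (-t)) * (x e * 2 ^ ∑ i ∈ s, x i)) := by
        refine poissonExpect_mono fun x ↦ ?_
        split_ifs with h
        · rw [mul_left_comm]
          exact le_mul_of_one_le_right zero_le (one_le_ofReal_two_rpow_neg_mul_two_pow h.le)
        · exact zero_le
    _ = _ := by
      rw [poissonExpect_const_mul, poissonExpect_count_mul_two_pow_sum hlam he,
        ← ENNReal.ofReal_mul (by positivity)]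

theorem poissonExpect_count_not_forall_le {V : Type*} (hlam : ∀ i, 0 ≤ lam i) (e : ι)
    (U : Finset V) (S : V → Finset ι) (heS : ∀ v ∈ U, e ∈ S v) {t μ : ℝ}
    (hμ : ∀ v ∈ U, ∑ i ∈ S v, lam i ≤ μ) :
    poissonExpect lam
        (fun x ↦ if ∀ v ∈ U, ((∑ i ∈ S v, x i : ℕ) : ℝ) ≤ t then 0 else (x e : ℝ≥0∞)) ≤
      U.card * ENNReal.ofReal (2 ^ (-t) * (2 * lam e * exp μ)) := by
  calc _ ≤ poissonExpect lam (fun x ↦ ∑ v ∈ U,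
        if t < ((∑ i ∈ S v, x i : ℕ) : ℝ) then (x e : ℝ≥0∞) else 0) := by
        refine poissonExpect_mono fun x ↦ ?_
        split_ifs with h
        · exact zero_le
        · push Not at h
          obtain ⟨v, hv, hlt⟩ := h
          refine le_of_eq_of_le ?_ (Finset.single_le_sum (fun _ _ ↦ zero_le) hv)
          rw [if_pos hlt]
    _ = ∑ v ∈ U, poissonExpect lam (fun x ↦
        if t < ((∑ i ∈ S v, x i : ℕ) : ℝ) then (x e : ℝ≥0∞) else 0) := poissonExpect_sum _ _
    _ ≤ ∑ v ∈ U, ENNReal.ofReal (2 ^ (-t) * (2 * lam e * exp μ)) := by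
        refine Finset.sum_le_sum fun v hv ↦ ?_
        refine (poissonExpect_count_mul_indicator_le hlam (heS v hv) t).trans ?_
        have := hlam e
        gcongr
        exact hμ v hv
    _ = _ := by rw [Finset.sum_const, nsmul_eq_mul]

theorem half_le_toReal_poissonExpect_count_forall_le {V : Type*} (hlam : ∀ i, 0 ≤ lam i)
    (e : ι) (U : Finset V) (S : V → Finset ι) (heS : ∀ v ∈ U, e ∈ S v) {t μ : ℝ}
    (hμ : ∀ v ∈ U, ∑ i ∈ S v, lam i ≤ μ) (hsmall : U.card * (2 ^ (-t) * (2 * exp μ)) ≤ 1 / 2) :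
    lam e / 2 ≤ (poissonExpect lam
        (fun x ↦ if ∀ v ∈ U, ((∑ i ∈ S v, x i : ℕ) : ℝ) ≤ t then (x e : ℝ≥0∞) else 0)).toReal := by
  set good := poissonExpect lam
    (fun x ↦ if ∀ v ∈ U, ((∑ i ∈ S v, x i : ℕ) : ℝ) ≤ t then (x e : ℝ≥0∞) else 0)
  set bad := poissonExpect lam
    (fun x ↦ if ∀ v ∈ U, ((∑ i ∈ S v, x i : ℕ) : ℝ) ≤ t then 0 else (x e : ℝ≥0∞))
  have hsplit : good + bad = ENNReal.ofReal (lam e) := by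
    rw [← poissonExpect_add, ← poissonExpect_count hlam e]
    congr 1 with x
    split_ifs <;> simp
  have hbad : bad ≤ ENNReal.ofReal (lam e / 2) := by
    refine (poissonExpect_count_not_forall_le hlam e U S heS hμ).trans ?_
    rw [← ENNReal.ofReal_natCast, ← ENNReal.ofReal_mul (Nat.cast_nonneg _)]
    refine ENNReal.ofReal_le_ofReal ?_
    nlinarith [hlam e]
  have hgood_ne_top : good ≠ ⊤ :=
    ((poissonExpect_ite_count_le hlam _ e).trans_lt ENNReal.ofReal_lt_top).ne
  rw [← ENNReal.ofReal_le_iff_le_toReal hgood_ne_top]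
  refine ENNReal.le_of_add_le_add_right (a := ENNReal.ofReal (lam e / 2)) ENNReal.ofReal_ne_top ?_
  rw [← ENNReal.ofReal_add (by linarith [hlam e]) (by linarith [hlam e]), add_halves, ← hsplit]
  gcongr

theorem tsum_poissonP_prod_mul_sum_ite (hlam : ∀ i, 0 ≤ lam i) (T : Finset ι) {a : ι → ℝ}
    (ha : ∀ i ∈ T, 0 ≤ a i) (good : ι → (ι → ℕ) → Prop) [∀ i x, Decidable (good i x)] :
    ∑' x, (∏ i, poissonP (lam i) (x i)) * ∑ i ∈ T, (if good i x then (x i : ℝ) * a i else 0) =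
      ∑ i ∈ T, a i *
        (poissonExpect lam (fun x ↦ if good i x then (x i : ℝ≥0∞) else 0)).toReal := by
  have hfin : ∀ i, poissonExpect lam (fun x ↦ if good i x then (x i : ℝ≥0∞) else 0) ≠ ⊤ :=
    fun i ↦ ((poissonExpect_ite_count_le hlam _ i).trans_lt ENNReal.ofReal_lt_top).ne
  have hterm_ne_top : ∀ x : ι → ℕ, ∀ i, ENNReal.ofReal (a i) *
      (if good i x then (x i : ℝ≥0∞) else 0) ≠ ⊤ :=
    fun x i ↦ ENNReal.mul_ne_top ENNReal.ofReal_ne_top (by split_ifs <;> simp)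
  have hterm : ∀ x : ι → ℕ,
      (∏ i, poissonP (lam i) (x i)) * ∑ i ∈ T, (if good i x then (x i : ℝ) * a i else 0) =
        ((∏ i, ENNReal.ofReal (poissonP (lam i) (x i))) *
          ∑ i ∈ T, ENNReal.ofReal (a i) * (if good i x then (x i : ℝ≥0∞) else 0)).toReal := by
    intro x
    rw [ENNReal.toReal_mul, ENNReal.toReal_prod, ENNReal.toReal_sum fun i _ ↦ hterm_ne_top x i]
    congr 1
    · exact Finset.prod_congr rfl fun i _ ↦
        (ENNReal.toReal_ofReal (poissonP_nonneg (hlam i) _)).symm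
    · refine Finset.sum_congr rfl fun i hi ↦ ?_
      split_ifs <;> simp [ENNReal.toReal_ofReal (ha i hi), mul_comm]
  rw [tsum_congr hterm, ← ENNReal.tsum_toReal_eq fun x ↦ ENNReal.mul_ne_top
    (ENNReal.prod_ne_top fun _ _ ↦ ENNReal.ofReal_ne_top)
    (ENNReal.sum_ne_top.2 fun i _ ↦ hterm_ne_top x i)]
  change (poissonExpect lam _).toReal = _
  simp only [poissonExpect_sum, poissonExpect_const_mul]
  rw [ENNReal.toReal_sum fun i _ ↦ ENNReal.mul_ne_top ENNReal.ofReal_ne_top (hfin i)]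
  refine Finset.sum_congr rfl fun i hi ↦ ?_
  rw [ENNReal.toReal_mul, ENNReal.toReal_ofReal (ha i hi)]

end PoissonExpectation

lemma exp_mul_two_rpow_neg_mul_le_half {L : ℝ} (hL : log 2 ≤ L) :
    exp L * (2 ^ (-(20 * L)) * (2 * exp (10 * L))) ≤ 1 / 2 := by
  have hlog2 := log_two_gt_d9
  rw [rpow_def_of_pos two_pos]
  calc _ = 2 * exp (L + log 2 * -(20 * L) + 10 * L) := by
        rw [exp_add, exp_add]
        ring
    _ ≤ 2 * exp (-log 2 + -log 2) := by
        gcongr 2 * exp ?_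
        nlinarith [mul_nonneg (sub_nonneg.2 hL) (by linarith : (0 : ℝ) ≤ 20 * log 2 - 11)]
    _ = 1 / 2 := by
        rw [exp_add, exp_neg, exp_log two_pos]
        norm_num

open scoped Classical in
/-- Poisson sampling of a fractional matching.  There is an absolute constant `c > 0` such
that for any rank-`r` hypergraph (`r ≥ 2`), fractional matching `h` and edge weights
`a ≥ 0`: if a random edge multiset `L'` includes `Poisson(10·h(e)·log r)` independent
copies of each edge `e`, and `L` is obtained by deleting all edges incident to a vertex
whose degree in `L'` exceeds `t = 20·log r`, then `E[a(L)] ≥ c·a(h)·log r`. -/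
theorem stmt14 : ∃ c : ℝ, 0 < c ∧
    ∀ (V : Type) [DecidableEq V], ∀ (E : Finset (Finset V)) (r : ℕ)
      (h a : Finset V → ℝ),
      2 ≤ r →
      (∀ e ∈ E, e.card ≤ r) →
      (∀ e ∈ E, 0 ≤ h e ∧ h e ≤ 1) →
      (∀ v : V, ∑ e ∈ E.filter (fun e => v ∈ e), h e ≤ 1) →
      (∀ e ∈ E, 0 ≤ a e) →
      c * (∑ e ∈ E, a e * h e) * Real.log r ≤
        ∑' x : ({e // e ∈ E} → ℕ),
          (∏ e : {e // e ∈ E}, poissonP (10 * h e.1 * Real.log r) (x e)) *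
            (∑ e ∈ E.attach, if (∀ v ∈ e.1,
                ((∑ f ∈ E.attach.filter (fun (f : {e // e ∈ E}) => v ∈ f.1), x f : ℕ) : ℝ)
                  ≤ 20 * Real.log r)
              then (x e : ℕ) * a e.1 else 0) := by
  refine ⟨5, by norm_num, fun V _ E r h a hr hrank hh hdeg ha ↦ ?_⟩
  have hr0 : (0 : ℝ) < r := by positivity
  set L := log r
  have hL : log 2 ≤ L := log_le_log two_pos (by exact_mod_cast hr)
  have hL0 : 0 ≤ L := (log_nonneg one_le_two).trans hL
  set lam : {e // e ∈ E} → ℝ := fun e ↦ 10 * h e.1 * L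
  have hlam : ∀ e, 0 ≤ lam e := fun e ↦ by
    have := (hh e.1 e.2).1
    positivity
  have hload : ∀ v, ∑ f ∈ E.attach.filter (fun f ↦ v ∈ f.1), lam f ≤ 10 * L := fun v ↦ by
    have hattach : ∑ f ∈ E.attach.filter (fun f ↦ v ∈ f.1), h f.1 =
        ∑ e ∈ E.filter (fun e ↦ v ∈ e), h e := by
      rw [Finset.sum_filter, Finset.sum_filter]
      exact Finset.sum_attach E fun e ↦ if v ∈ e then h e else 0
    simp only [lam]
    rw [← Finset.sum_mul, ← Finset.mul_sum, hattach]
    nlinarith [hdeg v]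
  have hsmall : ∀ e : {e // e ∈ E},
      (e.1.card : ℝ) * (2 ^ (-(20 * L)) * (2 * exp (10 * L))) ≤ 1 / 2 := fun e ↦ by
    refine le_trans ?_ (exp_mul_two_rpow_neg_mul_le_half hL)
    gcongr
    rw [exp_log hr0]
    exact_mod_cast hrank e.1 e.2
  rw [tsum_poissonP_prod_mul_sum_ite hlam E.attach fun e _ ↦ ha e.1 e.2]
  calc 5 * (∑ e ∈ E, a e * h e) * L = ∑ e ∈ E.attach, a e.1 * (lam e / 2) := by
        rw [Finset.mul_sum, Finset.sum_mul, ← Finset.sum_attach]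
        exact Finset.sum_congr rfl fun e _ ↦ by simp only [lam]; ring
    _ ≤ _ := Finset.sum_le_sum fun e _ ↦ mul_le_mul_of_nonneg_left
        (half_le_toReal_poissonExpect_count_forall_le hlam e e.1
          (fun v ↦ E.attach.filter fun f ↦ v ∈ f.1)
          (fun v hv ↦ Finset.mem_filter.2 ⟨Finset.mem_attach _ _, hv⟩)
          (fun v _ ↦ hload v) (hsmall e))
        (ha e.1 e.2)
end

section
/- Any deterministic LOCAL algorithm that computes a ρ-approximate maximum cardinality matching on n-vertex ring graphs requires Ω((log* n)/ρ) rounds. -/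
/-- The iterated logarithm `log* n`. -/
def logStar (n : ℕ) : ℕ :=
  if h : n ≤ 1 then 0 else logStar (Nat.log 2 n) + 1
decreasing_by
  exact Nat.log_lt_self 2 (by omega)

/-- The decision of a `t`-round deterministic LOCAL algorithm `A` for the ring edge
`(v, v+1)`, as a function of the IDs in the radius-`t` window around the edge. -/
def edgeChosen (A : List ℕ → Bool) (t : ℕ) {m : ℕ} (id : ZMod m → ℕ) (v : ZMod m) : Bool :=
  A ((List.range (2 * t + 2)).map fun j => id (v - (t : ZMod m) + (j : ZMod m)))

/-- Validity of a `t`-round LOCAL algorithm on the `m`-vertex ring with IDs below `N`: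
for every assignment of distinct IDs, the chosen edge set is a matching of size at least
`⌊m/2⌋/ρ` (a `ρ`-approximate maximum cardinality matching). -/
def ringValid (A : List ℕ → Bool) (t : ℕ) (ρ : ℝ) (N : ℕ) (m : ℕ) [NeZero m] : Prop :=
  ∀ id : ZMod m → ℕ, Function.Injective id → (∀ v, id v < N) →
    (∀ v : ZMod m, edgeChosen A t id v = true → edgeChosen A t id (v + 1) = true → False) ∧
    ((m / 2 : ℕ) : ℝ) / ρ ≤
      ((Finset.univ.filter (fun v : ZMod m => edgeChosen A t id v = true)).card : ℝ)

/-!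
A `t`-round algorithm is a function `A` of the `2t+2` IDs around an edge. Colour each
`(2t+2)`-set of IDs by the decision of `A` on it in increasing order. If the ID range `n³` is at
least the hypergraph Ramsey number, some `m ≈ 2ρ(2t+1)` IDs are monochromatic; on the ring labelled
by them in increasing order, `A` picks either two adjacent edges or at most `2t+1` edges, and
neither is a `ρ`-approximate matching. Otherwise `n³` is below the Erdős–Rado bound, a tower of
height `O(t)` over `O(ρt)`, so `log* n = O(ρt)`. For `t = 0` the triangles on five IDs already
give a contradiction.
-/

lemma logStar_two_pow_le (a : ℕ) : logStar (2 ^ a) ≤ logStar a + 1 := by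
  rw [logStar]
  split_ifs
  · omega
  · rw [Nat.log_pow one_lt_two]

lemma logStar_mono : Monotone logStar := by
  intro m n hmn
  induction n using Nat.strong_induction_on generalizing m with
  | _ n ih =>
    rw [logStar.eq_1 m, logStar.eq_1 n]
    split_ifs
    · exact Nat.zero_le _
    · exact Nat.zero_le _
    · omega
    · exact Nat.succ_le_succ (ih _ (Nat.log_lt_self 2 (by omega)) (Nat.log_mono_right hmn))

lemma logStar_le_self (n : ℕ) : logStar n ≤ n := by
  induction n using Nat.strong_induction_on with
  | _ n ih =>
    rw [logStar]
    split_ifs with hn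
    · omega
    · have hlog := Nat.log_lt_self 2 (show n ≠ 0 by omega)
      have := ih _ hlog
      omega

lemma logStar_iterate_two_pow_le (j y : ℕ) : logStar ((2 ^ ·)^[j] y) ≤ j + logStar y := by
  induction j with
  | zero => simp
  | succ j ih =>
    rw [Function.iterate_succ_apply']
    have := logStar_two_pow_le ((2 ^ ·)^[j] y)
    omega

lemma two_mul_le_two_pow (r : ℕ) : 2 * r ≤ 2 ^ r := by
  cases r with
  | zero => simp
  | succ r =>
    have := Nat.lt_two_pow_self (n := r)
    rw [pow_succ]
    omega

lemma two_pow_two_pow_add_one_pow_lt (r : ℕ) : (2 ^ 2 ^ r + 1) ^ r < 2 ^ 2 ^ 2 ^ r := by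
  have hr : r < 2 ^ r := Nat.lt_two_pow_self
  have hexp : (2 ^ r + 1) * r < 2 ^ 2 ^ r := calc
    (2 ^ r + 1) * r < 2 ^ r * (r + 1) := by nlinarith
    _ ≤ 2 ^ r * 2 ^ r := Nat.mul_le_mul_left _ hr
    _ = 2 ^ (2 * r) := by rw [two_mul, pow_add]
    _ ≤ 2 ^ 2 ^ r := Nat.pow_le_pow_right two_pos (two_mul_le_two_pow r)
  calc (2 ^ 2 ^ r + 1) ^ r ≤ (2 ^ (2 ^ r + 1)) ^ r := by
        gcongr
        rw [pow_succ]
        have : 1 ≤ 2 ^ 2 ^ r := Nat.one_le_two_pow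
        omega
    _ = 2 ^ ((2 ^ r + 1) * r) := (pow_mul _ _ _).symm
    _ < 2 ^ 2 ^ 2 ^ r := Nat.pow_lt_pow_right one_lt_two hexp

def IsMonochromatic (χ : Finset ℕ → Bool) (k : ℕ) (S : Finset ℕ) (c : Bool) : Prop :=
  ∀ T ⊆ S, T.card = k → χ T = c

/-- `P` is an initial segment of a chain still to be extended by elements of `V`: the colour
of `insert b T`, for a `k`-subset `T` of `P`, does not depend on the choice of `b ∈ P ∪ V`
above `T`. -/
def IsEndHomogeneous (χ : Finset ℕ → Bool) (k : ℕ) (P V : Finset ℕ) : Prop :=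
  ∀ T ⊆ P, T.card = k → ∀ b ∈ P ∪ V, ∀ b' ∈ P ∪ V,
    (∀ x ∈ T, x < b) → (∀ x ∈ T, x < b') → χ (insert b T) = χ (insert b' T)

namespace IsEndHomogeneous

variable {χ : Finset ℕ → Bool} {k : ℕ} {P V : Finset ℕ}

lemma mono (hPV : IsEndHomogeneous χ k P V) {V' : Finset ℕ} (hV' : V' ⊆ V) :
    IsEndHomogeneous χ k P V' :=
  fun T hT hTk b hb b' hb' =>
    hPV T hT hTk b (Finset.union_subset_union_right hV' hb) b'
      (Finset.union_subset_union_right hV' hb')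

lemma extend (hPV : IsEndHomogeneous χ k P V) (hlt : ∀ p ∈ P, ∀ v ∈ V, p < v) {a : ℕ}
    (ha : a ∈ V) {V' : Finset ℕ} (hV' : V' ⊆ V) (haV' : ∀ v ∈ V', a < v)
    (hconst : ∀ T ⊆ insert a P, T.card = k → ∀ b ∈ V', ∀ b' ∈ V',
      χ (insert b T) = χ (insert b' T)) :
    IsEndHomogeneous χ k (insert a P) V' := by
  intro T hT hTk b hb b' hb' hTb hTb'
  by_cases haT : a ∈ T
  · have hmem : ∀ x ∈ insert a P ∪ V', (∀ z ∈ T, z < x) → x ∈ V' := by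
      intro x hx hTx
      rcases Finset.mem_union.1 hx with hx | hx
      · rcases Finset.mem_insert.1 hx with rfl | hx
        · exact absurd (hTx _ haT) (lt_irrefl _)
        · exact absurd (hTx a haT) (hlt x hx a ha).not_gt
      · exact hx
    exact hconst T hT hTk b (hmem b hb hTb) b' (hmem b' hb' hTb')
  · have hTP : T ⊆ P := fun x hx => (Finset.mem_insert.1 (hT hx)).resolve_left
      fun hxa => haT (hxa ▸ hx)
    have hsub : insert a P ∪ V' ⊆ P ∪ V := by
      intro x hx
      simp only [Finset.mem_union, Finset.mem_insert] at hx ⊢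
      rcases hx with (rfl | hx) | hx
      · exact Or.inr ha
      · exact Or.inl hx
      · exact Or.inr (hV' hx)
    exact hPV T hTP hTk b (hsub hb) b' (hsub hb') hTb hTb'

/-- The step of the Erdős–Rado construction: `a = min V` joins the chain, and the candidates
`b` are sorted by their colour pattern `T ↦ χ (insert b T)` on the `k`-subsets `T` of
`insert a P`; a largest class survives. -/
lemma exists_extend (hPV : IsEndHomogeneous χ k P V) (hlt : ∀ p ∈ P, ∀ v ∈ V, p < v)
    {q : ℕ} (hV : 2 ^ 2 ^ (P.card + 1) * q < V.card) :
    ∃ a ∈ V, ∃ V' ⊆ V.erase a, q ≤ V'.card ∧ (∀ p ∈ insert a P, ∀ v ∈ V', p < v) ∧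
      IsEndHomogeneous χ k (insert a P) V' := by
  have hVne : V.Nonempty := Finset.card_pos.1 (by omega)
  set a := V.min' hVne
  have haV : a ∈ V := V.min'_mem hVne
  have haP : a ∉ P := fun h => (hlt a h a haV).false
  set pattern : ℕ → Finset (Finset ℕ) := fun b =>
    (insert a P).powerset.filter fun T => T.card = k ∧ χ (insert b T) = true
  have hpattern : ∀ b ∈ V.erase a, pattern b ∈ (insert a P).powerset.powerset :=
    fun b _ => Finset.mem_powerset.2 (Finset.filter_subset _ _)
  have hcard : (insert a P).powerset.powerset.card * q ≤ (V.erase a).card := by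
    rw [Finset.card_powerset, Finset.card_powerset, Finset.card_insert_of_notMem haP,
      Finset.card_erase_of_mem haV]
    omega
  obtain ⟨y, -, hy⟩ :=
    Finset.exists_le_card_fiber_of_mul_le_card_of_maps_to hpattern ⟨∅, by simp⟩ hcard
  set V' := (V.erase a).filter fun b => pattern b = y
  have hV'V : V' ⊆ V.erase a := Finset.filter_subset _ _
  have haV' : ∀ v ∈ V', a < v := fun v hv =>
    lt_of_le_of_ne (V.min'_le v (Finset.mem_of_mem_erase (hV'V hv)))
      (Finset.ne_of_mem_erase (hV'V hv)).symm
  have hlt' : ∀ p ∈ insert a P, ∀ v ∈ V', p < v := by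
    intro p hp v hv
    rcases Finset.mem_insert.1 hp with rfl | hp
    · exact haV' v hv
    · exact hlt p hp v (Finset.mem_of_mem_erase (hV'V hv))
  refine ⟨a, haV, V', hV'V, hy, hlt', hPV.extend hlt haV (hV'V.trans (Finset.erase_subset _ _))
    haV' fun T hT hTk b hb b' hb' => ?_⟩
  have hTmem : ∀ x, T ∈ pattern x ↔ χ (insert x T) = true := by
    simp [pattern, hT, hTk]
  have := hTmem b
  rw [(Finset.mem_filter.1 hb).2, ← (Finset.mem_filter.1 hb').2, hTmem] at this
  exact Bool.eq_iff_iff.2 this.symm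

lemma exists_chain (r₀ : ℕ) : ∀ (r : ℕ) (P V : Finset ℕ), P.card + r ≤ r₀ →
    (∀ p ∈ P, ∀ v ∈ V, p < v) → IsEndHomogeneous χ k P V → (2 ^ 2 ^ r₀ + 1) ^ r ≤ V.card →
    ∃ C ⊆ V, C.card = r ∧ IsEndHomogeneous χ k (P ∪ C) ∅
  | 0, P, V, _, _, hPV, _ =>
    ⟨∅, Finset.empty_subset _, rfl, by simpa using hPV.mono (Finset.empty_subset V)⟩
  | r + 1, P, V, hr, hlt, hPV, hV => by
    have hK : 2 ^ 2 ^ (P.card + 1) ≤ 2 ^ 2 ^ r₀ :=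
      Nat.pow_le_pow_right two_pos (Nat.pow_le_pow_right two_pos (by omega))
    have hq : 0 < (2 ^ 2 ^ r₀ + 1) ^ r := by positivity
    obtain ⟨a, haV, V', hV', hV'card, hlt', hPV'⟩ :=
      hPV.exists_extend hlt (q := (2 ^ 2 ^ r₀ + 1) ^ r) (by rw [pow_succ] at hV; nlinarith)
    have haP : a ∉ P := fun h => (hlt a h a haV).false
    obtain ⟨C, hCV', hCcard, hC⟩ := exists_chain r₀ r (insert a P) V'
      (by rw [Finset.card_insert_of_notMem haP]; omega) hlt' hPV' hV'card
    have haC : a ∉ C := fun h => Finset.notMem_erase a V (hV' (hCV' h))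
    refine ⟨insert a C,
      Finset.insert_subset haV ((hCV'.trans hV').trans (Finset.erase_subset _ _)),
      by rw [Finset.card_insert_of_notMem haC, hCcard], ?_⟩
    rwa [Finset.union_insert, ← Finset.insert_union]

/-- The colour of a `(k+1)`-subset of an end-homogeneous chain `C` is unchanged when its largest
element is replaced by `max C`. -/
lemma isMonochromatic_succ {C : Finset ℕ} (hC : IsEndHomogeneous χ k C ∅) (hne : C.Nonempty)
    {S : Finset ℕ} (hS : S ⊆ C.erase (C.max' hne)) {c : Bool}
    (hmono : IsMonochromatic (fun T => χ (insert (C.max' hne) T)) k S c) :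
    IsMonochromatic χ (k + 1) S c := by
  intro T hTS hTk
  have hTne : T.Nonempty := Finset.card_pos.1 (by omega)
  set b := T.max' hTne
  have hbT : b ∈ T := T.max'_mem hTne
  have hT'S : T.erase b ⊆ S := (Finset.erase_subset _ _).trans hTS
  have hT'C : T.erase b ⊆ C := fun x hx => Finset.mem_of_mem_erase (hS (hT'S hx))
  have hT'k : (T.erase b).card = k := by rw [Finset.card_erase_of_mem hbT]; omega
  have hbelow_b : ∀ x ∈ T.erase b, x < b := fun x hx =>
    lt_of_le_of_ne (T.le_max' x (Finset.mem_of_mem_erase hx)) (Finset.ne_of_mem_erase hx)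
  have hbelow_max : ∀ x ∈ T.erase b, x < C.max' hne := fun x hx =>
    have hx' := hS (hT'S hx)
    lt_of_le_of_ne (C.le_max' x (Finset.mem_of_mem_erase hx')) (Finset.ne_of_mem_erase hx')
  have hbC : b ∈ C ∪ ∅ := Finset.mem_union_left _ (Finset.mem_of_mem_erase (hS (hTS hbT)))
  have hmaxC : C.max' hne ∈ C ∪ ∅ := Finset.mem_union_left _ (C.max'_mem hne)
  rw [← Finset.insert_erase hbT, hC _ hT'C hT'k b hbC _ hmaxC hbelow_b hbelow_max]
  exact hmono _ hT'S hT'k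

end IsEndHomogeneous

def ramseyBound : ℕ → ℕ → ℕ
  | 0, s => 2 * s
  | k + 1, s => (2 ^ 2 ^ (ramseyBound k s + 1) + 1) ^ (ramseyBound k s + 1)

theorem exists_isMonochromatic (s : ℕ) :
    ∀ (k : ℕ) (χ : Finset ℕ → Bool) (U : Finset ℕ), ramseyBound k s ≤ U.card →
      ∃ S ⊆ U, S.card = s ∧ ∃ c, IsMonochromatic χ (k + 1) S c
  | 0, χ, U, hU => by
    obtain ⟨c, -, hc⟩ := Finset.exists_le_card_fiber_of_mul_le_card_of_maps_to
      (f := fun b => χ {b}) (fun _ _ => Finset.mem_univ _) Finset.univ_nonempty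
      (by simpa [ramseyBound, mul_comm] using hU)
    obtain ⟨S, hS, hScard⟩ := Finset.exists_subset_card_eq hc
    refine ⟨S, hS.trans (Finset.filter_subset _ _), hScard, c, fun T hT hTk => ?_⟩
    obtain ⟨b, rfl⟩ := Finset.card_eq_one.1 hTk
    exact (Finset.mem_filter.1 (hS (hT (Finset.mem_singleton_self b)))).2
  | k + 1, χ, U, hU => by
    obtain ⟨C, hCU, hCcard, hC⟩ := IsEndHomogeneous.exists_chain (χ := χ) (k := k + 1)
      (ramseyBound k s + 1) _ ∅ U (by simp) (by simp) (by simp [IsEndHomogeneous]) hU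
    rw [Finset.empty_union] at hC
    have hne : C.Nonempty := Finset.card_pos.1 (by omega)
    obtain ⟨S, hS, hScard, c, hmono⟩ := exists_isMonochromatic s k
      (fun T => χ (insert (C.max' hne) T)) (C.erase (C.max' hne))
      (by rw [Finset.card_erase_of_mem (C.max'_mem hne)]; omega)
    exact ⟨S, hS.trans ((Finset.erase_subset _ _).trans hCU), hScard, c,
      hC.isMonochromatic_succ hne hS hmono⟩

lemma ramseyBound_lt (k s : ℕ) : ramseyBound k s < (2 ^ ·)^[3 * k] (2 * s + 1) := by
  induction k with
  | zero => simp [ramseyBound]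
  | succ k ih =>
    set T := (2 ^ ·)^[3 * k] (2 * s + 1)
    calc ramseyBound (k + 1) s ≤ (2 ^ 2 ^ T + 1) ^ T := by
          rw [ramseyBound]
          gcongr <;> first | omega | simp
      _ < 2 ^ 2 ^ 2 ^ T := two_pow_two_pow_add_one_pow_lt T
      _ = (2 ^ ·)^[3 * (k + 1)] (2 * s + 1) := by
          rw [show 3 * (k + 1) = 3 + 3 * k by ring, Function.iterate_add_apply]
          rfl

section Ring

variable {A : List ℕ → Bool} {t m : ℕ}

lemma edgeChosen_eq (id : ZMod m → ℕ) (v : ZMod m) :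
    edgeChosen A t id v = A ((List.range (2 * t + 2)).map fun j : ℕ => id (v - t + j)) := by
  unfold edgeChosen
  congr 1
  show List.map _ ((List.range (2 * t + 2)).flatMap (pure ∘ fun j : ℕ => (j : ZMod m))) = _
  rw [List.flatMap_pure_eq_map, List.map_map]
  rfl

variable [NeZero m]

lemma ZMod.val_sub_add_natCast {v : ZMod m} {j : ℕ} (ht : t ≤ v.val) (hj : v.val - t + j < m) :
    (v - t + j).val = v.val - t + j := by
  have : v - t + j = ((v.val - t + j : ℕ) : ZMod m) := by
    push_cast [Nat.cast_sub ht, ZMod.natCast_zmod_val]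
    ring
  rw [this, ZMod.val_cast_of_lt hj]

/-- An edge whose window does not wrap around the ring sees `2t+2` IDs in increasing order. -/
lemma edgeChosen_eq_of_isMonochromatic {S : Finset ℕ} {c : Bool}
    (hmono : IsMonochromatic (fun T => A (T.sort (· ≤ ·))) (2 * t + 2) S c)
    {id : ZMod m → ℕ} (hS : ∀ v, id v ∈ S) (hid : ∀ a b : ZMod m, a.val < b.val → id a < id b)
    {v : ZMod m} (h₁ : t ≤ v.val) (h₂ : v.val + t + 1 < m) : edgeChosen A t id v = c := by
  set w := (List.range (2 * t + 2)).map fun j : ℕ => id (v - t + j)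
  have hw : w.Pairwise (· < ·) := by
    refine List.pairwise_map.2 (List.Pairwise.imp_of_mem ?_ List.pairwise_lt_range)
    intro i j hi hj hij
    apply hid
    rw [ZMod.val_sub_add_natCast h₁ (by simp at hi; omega),
      ZMod.val_sub_add_natCast h₁ (by simp at hj; omega)]
    omega
  have hsort : w.toFinset.sort (· ≤ ·) = w :=
    (List.toFinset_sort _ hw.nodup).2 (hw.imp le_of_lt)
  calc edgeChosen A t id v = A w := edgeChosen_eq id v
    _ = A (w.toFinset.sort (· ≤ ·)) := by rw [hsort]
    _ = c := hmono _ (fun x hx => ?_) ?_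
  · obtain ⟨j, -, rfl⟩ := List.mem_map.1 (List.mem_toFinset.1 hx)
    exact hS _
  · rw [List.toFinset_card_of_nodup hw.nodup, List.length_map, List.length_range]

lemma card_edgeChosen_le {id : ZMod m → ℕ}
    (h : ∀ v : ZMod m, t ≤ v.val → v.val + t + 1 < m → edgeChosen A t id v = false) :
    (Finset.univ.filter fun v => edgeChosen A t id v = true).card ≤ 2 * t + 1 := by
  calc _ ≤ (Finset.range t ∪ Finset.Ico (m - t - 1) m).card := by
        refine Finset.card_le_card_of_injOn ZMod.val (fun v hv => ?_)
          (fun a _ b _ hab => ZMod.val_injective m hab)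
        have hv := (Finset.mem_filter.1 hv).2
        have := v.val_lt
        simp only [Finset.coe_union, Finset.coe_range, Finset.coe_Ico, Set.mem_union,
          Set.mem_Iio, Set.mem_Ico]
        by_contra hcon
        have := h v (by omega) (by omega)
        simp_all
    _ ≤ (Finset.range t).card + (Finset.Ico (m - t - 1) m).card := Finset.card_union_le _ _
    _ ≤ 2 * t + 1 := by simp only [Finset.card_range, Nat.card_Ico]; omega

lemma exists_ringLabelling {S : Finset ℕ} (hS : S.card = m) :
    ∃ id : ZMod m → ℕ, (∀ v, id v ∈ S) ∧ ∀ a b : ZMod m, a.val < b.val → id a < id b :=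
  ⟨fun v => S.orderEmbOfFin hS ⟨v.val, v.val_lt⟩, fun _ => S.orderEmbOfFin_mem hS _,
    fun _ _ hab => (S.orderEmbOfFin hS).strictMono hab⟩

lemma not_ringValid_of_isMonochromatic {ρ : ℝ} {N : ℕ} (hρ : 1 ≤ ρ)
    (hm : ρ * (2 * t + 1) < (m / 2 : ℕ)) {S : Finset ℕ} (hSN : ∀ x ∈ S, x < N)
    (hS : S.card = m) {c : Bool}
    (hmono : IsMonochromatic (fun T => A (T.sort (· ≤ ·))) (2 * t + 2) S c) :
    ¬ ringValid A t ρ N m := by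
  intro hvalid
  obtain ⟨id, hidS, hid⟩ := exists_ringLabelling hS
  have hinj : Function.Injective id := fun a b hab => ZMod.val_injective m <| by
    by_contra hne
    rcases Nat.lt_or_gt_of_ne hne with h | h
    · exact (hid a b h).ne hab
    · exact (hid b a h).ne' hab
  obtain ⟨hmatch, hcount⟩ := hvalid id hinj fun v => hSN _ (hidS v)
  have hmid : ∀ v : ZMod m, t ≤ v.val → v.val + t + 1 < m → edgeChosen A t id v = c :=
    fun _ => edgeChosen_eq_of_isMonochromatic hmono hidS hid
  have hm' : (2 * t + 1 : ℝ) < (m / 2 : ℕ) := by nlinarith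
  have hm'' : 2 * t + 1 < m / 2 := by exact_mod_cast hm'
  cases c with
  | true =>
    have hval : ∀ i < m, ((i : ℕ) : ZMod m).val = i := fun i hi => ZMod.val_cast_of_lt hi
    apply hmatch (t : ZMod m)
    · exact hmid _ (by rw [hval t (by omega)]) (by rw [hval t (by omega)]; omega)
    · rw [← Nat.cast_succ]
      exact hmid _ (by rw [hval _ (by omega)]; omega) (by rw [hval _ (by omega)]; omega)
  | false =>
    have hcard := card_edgeChosen_le (A := A) (id := id) hmid
    have : ((m / 2 : ℕ) : ℝ) ≤ ρ * (2 * t + 1) := by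
      rw [div_le_iff₀ (by linarith)] at hcount
      have : ((Finset.univ.filter fun v => edgeChosen A t id v = true).card : ℝ) ≤ 2 * t + 1 := by
        exact_mod_cast hcard
      nlinarith
    linarith

end Ring

section ZeroRounds

variable {A : List ℕ → Bool} {ρ : ℝ} {N : ℕ}

lemma edgeChosen_zero {m : ℕ} (id : ZMod m → ℕ) (v : ZMod m) :
    edgeChosen A 0 id v = A [id v, id (v + 1)] := by
  simp [edgeChosen_eq, List.range_succ]

lemma triangle_toNat_eq_one (hv : ringValid A 0 ρ N 3) (hρ : 0 < ρ) {x y z : ℕ}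
    (hx : x < N) (hy : y < N) (hz : z < N) (hxy : x ≠ y) (hyz : y ≠ z) (hxz : x ≠ z) :
    (A [x, y]).toNat + (A [y, z]).toNat + (A [z, x]).toNat = 1 := by
  let id : ZMod 3 → ℕ := ![x, y, z]
  have hinj : Function.Injective id := by
    intro a b hab
    fin_cases a <;> fin_cases b <;> first | rfl | simp_all [id, eq_comm]
  obtain ⟨hmatch, hcount⟩ := hv id hinj (fun v => by fin_cases v <;> assumption)
  have e0 : edgeChosen A 0 id 0 = A [x, y] := by rw [edgeChosen_zero]; rfl
  have e1 : edgeChosen A 0 id 1 = A [y, z] := by rw [edgeChosen_zero]; rfl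
  have e2 : edgeChosen A 0 id 2 = A [z, x] := by rw [edgeChosen_zero]; rfl
  have h01 := hmatch 0
  have h12 := hmatch 1
  have h20 := hmatch 2
  rw [show (0 + 1 : ZMod 3) = 1 from rfl] at h01
  rw [show (1 + 1 : ZMod 3) = 2 from rfl] at h12
  rw [show (2 + 1 : ZMod 3) = 0 from rfl] at h20
  have hpos : 0 < (Finset.univ.filter fun v : ZMod 3 => edgeChosen A 0 id v = true).card := by
    have : (0 : ℝ) < ((3 / 2 : ℕ) : ℝ) / ρ := by norm_num; positivity
    exact_mod_cast this.trans_le hcount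
  obtain ⟨v, hvchosen⟩ := Finset.card_pos.1 hpos
  have hsome : A [x, y] = true ∨ A [y, z] = true ∨ A [z, x] = true := by
    have hchosen := (Finset.mem_filter.1 hvchosen).2
    rcases (by decide : ∀ v : ZMod 3, v = 0 ∨ v = 1 ∨ v = 2) v with rfl | rfl | rfl
    · exact Or.inl (e0 ▸ hchosen)
    · exact Or.inr (Or.inl (e1 ▸ hchosen))
    · exact Or.inr (Or.inr (e2 ▸ hchosen))
  rw [e0, e1] at h01
  rw [e1, e2] at h12
  rw [e2, e0] at h20
  generalize A [x, y] = p at *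
  generalize A [y, z] = q at *
  generalize A [z, x] = r at *
  cases p <;> cases q <;> cases r <;> simp_all

/-- Summing over the 20 directed triangles would count each of the 20 ordered pairs three times. -/
lemma not_forall_triangle_toNat_eq_one (f : ℕ → ℕ → Bool) :
    ¬ ∀ x < 5, ∀ y < 5, ∀ z < 5, x ≠ y → y ≠ z → x ≠ z →
      (f x y).toNat + (f y z).toNat + (f z x).toNat = 1 := by
  intro h
  simp only [Nat.forall_lt_succ_right, Nat.not_lt_zero, IsEmpty.forall_iff, forall_const,
    true_and, ne_eq, not_true_eq_false, OfNat.ofNat_ne_zero, zero_ne_one] at h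
  omega

lemma not_ringValid_zero (hρ : 0 < ρ) (hN : 5 ≤ N) :
    ¬ ringValid A 0 ρ N 3 := fun hv =>
  not_forall_triangle_toNat_eq_one (fun x y => A [x, y]) fun _ hx _ hy _ hz hxy hyz hxz =>
    triangle_toNat_eq_one hv hρ (by omega) (by omega) (by omega) hxy hyz hxz

end ZeroRounds

lemma logStar_le_of_forall_ringValid {n t : ℕ} {A : List ℕ → Bool} {ρ : ℝ} (hρ : 1 ≤ ρ)
    {m : ℕ} (hm : ρ * (2 * t + 1) < (m / 2 : ℕ))
    (hvalid : ∀ m : ℕ, 3 ≤ m → m ≤ n → ∀ [NeZero m], ringValid A t ρ (n ^ 3) m) :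
    logStar n ≤ 6 * t + 2 * m + 4 := by
  by_cases hmn : m ≤ n
  · by_cases hR : ramseyBound (2 * t + 1) m ≤ n ^ 3
    · have : (2 * t + 1 : ℝ) < (m / 2 : ℕ) := by nlinarith
      have hm3 : 2 * t + 1 < m / 2 := by exact_mod_cast this
      have : NeZero m := ⟨by omega⟩
      obtain ⟨S, hSU, hScard, c, hmono⟩ := exists_isMonochromatic m (2 * t + 1)
        (fun T => A (T.sort (· ≤ ·))) (Finset.range (n ^ 3)) (by simpa using hR)
      exact (not_ringValid_of_isMonochromatic hρ hm (fun x hx => Finset.mem_range.1 (hSU hx))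
        hScard hmono (hvalid m (by omega) hmn)).elim
    · have htower := ramseyBound_lt (2 * t + 1) m
      calc logStar n ≤ logStar (n ^ 3) := logStar_mono (Nat.le_self_pow (by norm_num) n)
        _ ≤ logStar ((2 ^ ·)^[3 * (2 * t + 1)] (2 * m + 1)) := logStar_mono (by omega)
        _ ≤ 3 * (2 * t + 1) + logStar (2 * m + 1) := logStar_iterate_two_pow_le _ _
        _ ≤ 6 * t + 2 * m + 4 := by have := logStar_le_self (2 * m + 1); omega
  · have := logStar_le_self n
    omega

/-- Linial-type lower bound: any deterministic LOCAL algorithm computing a `ρ`-approximate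
maximum cardinality matching on rings of up to `n` vertices requires `Ω((log* n)/ρ)`
rounds. -/
theorem stmt16 : ∃ C : ℝ, 0 < C ∧
    ∀ (n t : ℕ) (A : List ℕ → Bool) (ρ : ℝ),
      3 ≤ n → 1 ≤ ρ →
      (∀ m : ℕ, 3 ≤ m → m ≤ n → ∀ [NeZero m], ringValid A t ρ (n ^ 3) m) →
      C * (logStar n : ℝ) / ρ ≤ (t : ℝ) := by
  refine ⟨1 / 30, by norm_num, fun n t A ρ hn hρ hvalid => ?_⟩
  have hρ0 : 0 < ρ := by linarith
  obtain rfl | ht := Nat.eq_zero_or_pos t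
  · have hN : 5 ≤ n ^ 3 := (by norm_num : 5 ≤ 3 ^ 3).trans (Nat.pow_le_pow_left hn 3)
    exact (not_ringValid_zero hρ0 hN (hvalid 3 le_rfl hn)).elim
  set k := ⌈ρ * (2 * t + 1)⌉₊
  have hk : (k : ℝ) < ρ * (2 * t + 1) + 1 := Nat.ceil_lt_add_one (by positivity)
  have hm : ρ * (2 * t + 1) < ((2 * k + 2) / 2 : ℕ) := by
    rw [show (2 * k + 2) / 2 = k + 1 by omega]
    push_cast
    linarith [Nat.le_ceil (ρ * (2 * t + 1))]
  have hlog : (logStar n : ℝ) ≤ 6 * t + 2 * (2 * k + 2) + 4 := by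
    exact_mod_cast logStar_le_of_forall_ringValid hρ hm hvalid
  have ht1 : (1 : ℝ) ≤ t := by exact_mod_cast ht
  rw [div_le_iff₀ hρ0]
  nlinarith
end

section
/- Let G be a t-round deterministic LOCAL matching algorithm on ring graphs guaranteeing a ρ-approximation to maximum cardinality matching, run on an n-vertex ring. Then in the output matching M, every contiguous sequence of 8ρt consecutive edges of the ring contains at least one edge of M. -/
/-- `edgeChosen` written as a map over natural-number offsets. -/
theorem edgeChosen_eq_natMap (A : List ℕ → Bool) (t m : ℕ) (id : ZMod m → ℕ) (v : ZMod m) :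
    edgeChosen A t id v
      = A ((List.range (2 * t + 2)).map fun j : ℕ => id (v - (t : ZMod m) + (j : ZMod m))) := by
  unfold edgeChosen
  simp [← List.map_eq_flatMap, List.map_map, Function.comp_def]

/-- If a `t`-round (`t ≥ 1`) deterministic LOCAL algorithm guarantees a `ρ`-approximate
maximum cardinality matching on all rings of at most `n` vertices, then on the `n`-vertex
ring every contiguous stretch of `8ρt` consecutive edges contains a matched edge. -/
theorem stmt17 (n t : ℕ) (A : List ℕ → Bool) (ρ : ℝ) [NeZero n]
    (hρ : 1 ≤ ρ) (ht : 1 ≤ t) (hn : 3 ≤ n)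
    (hvalid : ∀ m : ℕ, 3 ≤ m → m ≤ n → ∀ [NeZero m], ringValid A t ρ (n ^ 3) m)
    (id : ZMod n → ℕ) (hinj : Function.Injective id) (hbd : ∀ v, id v < n ^ 3)
    (v : ZMod n) :
    ∃ j : ℕ, (j : ℝ) < 8 * ρ * t ∧ edgeChosen A t id (v + (j : ZMod n)) = true := by
  have hρ0 : (0:ℝ) < ρ := lt_of_lt_of_le one_pos hρ
  have ht1 : (1:ℝ) ≤ (t:ℝ) := by exact_mod_cast ht
  set m : ℕ := ⌈(8:ℝ) * ρ * t⌉₊ with hmdef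
  have h8m : (8:ℝ) ≤ 8 * ρ * t := by nlinarith
  have hm8 : 8 ≤ m := by
    have h1 := Nat.le_ceil ((8:ℝ) * ρ * t)
    have h2 : (8:ℝ) ≤ (m:ℝ) := le_trans h8m h1
    exact_mod_cast h2
  by_cases hmn : m ≤ n
  · -- hard case: build a smaller ring of m vertices
    by_contra hcon
    push_neg at hcon
    have hfalse : ∀ j : ℕ, j < m → edgeChosen A t id (v + (j : ZMod n)) = false := by
      intro j hj
      have hjr : (j:ℝ) < 8 * ρ * t := Nat.lt_ceil.mp hj
      have := hcon j hjr
      simpa using this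
    haveI : NeZero m := ⟨by omega⟩
    set id' : ZMod m → ℕ := fun w => id (v + ((w.val : ℕ) : ZMod n)) with hid'
    have hinj' : Function.Injective id' := by
      intro a b hab
      have h1 : v + ((a.val : ℕ) : ZMod n) = v + ((b.val : ℕ) : ZMod n) := hinj hab
      have h2 : ((a.val : ℕ) : ZMod n) = ((b.val : ℕ) : ZMod n) := add_left_cancel h1
      have h3 : ((a.val : ℕ) : ZMod n).val = ((b.val : ℕ) : ZMod n).val := by rw [h2]
      rw [ZMod.val_cast_of_lt (lt_of_lt_of_le a.val_lt hmn),
        ZMod.val_cast_of_lt (lt_of_lt_of_le b.val_lt hmn)] at h3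
      exact ZMod.val_injective m h3
    have hbd' : ∀ w, id' w < n ^ 3 := fun w => hbd _
    -- middle edges of the small ring are unmatched
    have hmid : ∀ w : ZMod m, t ≤ w.val → w.val + t + 2 ≤ m →
        edgeChosen A t id' w = false := by
      intro w hw1 hw2
      have key : edgeChosen A t id' w = edgeChosen A t id (v + ((w.val : ℕ) : ZMod n)) := by
        rw [edgeChosen_eq_natMap, edgeChosen_eq_natMap]
        congr 1
        apply List.map_congr_left
        intro j hj
        have hj2 : j < 2 * t + 2 := List.mem_range.mp hj
        have hcast : ((w.val - t + j : ℕ) : ZMod m) = w - (t : ZMod m) + (j : ZMod m) := by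
          have hww : ((w.val : ℕ) : ZMod m) = w := by
            simp [ZMod.natCast_val, ZMod.cast_id]
          push_cast [Nat.cast_sub hw1]
          rw [hww]
        have hval : (w - (t : ZMod m) + (j : ZMod m)).val = w.val - t + j := by
          rw [← hcast, ZMod.val_cast_of_lt (by omega)]
        show id' _ = id _
        rw [hid']
        simp only [hval]
        congr 1
        push_cast [Nat.cast_sub hw1]
        ring
      rw [key]
      exact hfalse w.val (by omega)
    obtain ⟨-, hcard⟩ := hvalid m (by omega) hmn id' hinj' hbd'
    -- bound the number of chosen edges in the small ring by 2t+1
    have hm8t : 8 * t ≤ m := by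
      have h1 : (8:ℝ) * t ≤ 8 * ρ * t := by nlinarith
      have h2 : (8:ℝ) * ρ * t ≤ (m:ℝ) := Nat.le_ceil _
      have h3 : ((8 * t : ℕ):ℝ) ≤ (m:ℝ) := by push_cast; linarith
      exact_mod_cast h3
    set S := Finset.univ.filter (fun w : ZMod m => edgeChosen A t id' w = true) with hS
    have hScard : S.card ≤ 2 * t + 1 := by
      have hsub : ∀ w ∈ S, w.val ∈ Finset.range t ∪ Finset.Ico (m - t - 1) m := by
        intro w hw
        simp only [hS, Finset.mem_filter] at hw
        by_contra hcc
        simp only [Finset.mem_union, Finset.mem_range, Finset.mem_Ico] at hcc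
        push_neg at hcc
        obtain ⟨ha, hb⟩ := hcc
        have hwlt := ZMod.val_lt w
        have h1 : t ≤ w.val := by omega
        have h2 : w.val + t + 2 ≤ m := by
          by_contra hcc2
          have := hb (by omega)
          omega
        have := hmid w h1 h2
        rw [this] at hw
        exact absurd hw.2 (by simp)
      calc S.card ≤ (Finset.range t ∪ Finset.Ico (m - t - 1) m).card :=
            Finset.card_le_card_of_injOn (fun w => w.val) hsub
              (fun a _ b _ hab => ZMod.val_injective m hab)
        _ ≤ (Finset.range t).card + (Finset.Ico (m - t - 1) m).card :=
            Finset.card_union_le _ _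
        _ ≤ 2 * t + 1 := by
            rw [Finset.card_range, Nat.card_Ico]; omega
    -- derive the numerical contradiction
    have hSr : (S.card : ℝ) ≤ 2 * t + 1 := by exact_mod_cast hScard
    have hdiv : ((m / 2 : ℕ) : ℝ) / ρ ≤ 2 * t + 1 := le_trans hcard hSr
    have hhalf : (m:ℝ) - 1 ≤ 2 * ((m / 2 : ℕ) : ℝ) := by
      have h1 : m - 1 ≤ 2 * (m / 2) := by omega
      have h2 : ((m - 1 : ℕ):ℝ) ≤ 2 * ((m / 2 : ℕ) : ℝ) := by exact_mod_cast h1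
      rw [Nat.cast_sub (by omega : 1 ≤ m)] at h2
      push_cast at h2; linarith
    have hmge : (8:ℝ) * ρ * t ≤ (m:ℝ) := Nat.le_ceil _
    have hle : ((m / 2 : ℕ) : ℝ) ≤ ρ * (2 * t + 1) := by
      rw [div_le_iff₀ hρ0] at hdiv
      linarith
    nlinarith
  · -- easy case: 8ρt exceeds n, so any chosen edge works
    push_neg at hmn
    have hnr : (n:ℝ) < 8 * ρ * t := Nat.lt_ceil.mp hmn
    obtain ⟨-, hcard⟩ := hvalid n hn le_rfl id hinj hbd
    set S := Finset.univ.filter (fun w : ZMod n => edgeChosen A t id w = true) with hS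
    have hpos : (0:ℝ) < ((n / 2 : ℕ) : ℝ) / ρ := by
      apply div_pos _ hρ0
      have h1 : 1 ≤ n / 2 := by omega
      have h2 : (1:ℝ) ≤ ((n / 2 : ℕ) : ℝ) := by exact_mod_cast h1
      linarith
    have hSpos : 0 < S.card := by
      have h1 : (0:ℝ) < (S.card : ℝ) := lt_of_lt_of_le hpos hcard
      exact_mod_cast h1
    obtain ⟨w, hw⟩ := Finset.card_pos.mp hSpos
    simp only [hS, Finset.mem_filter] at hw
    refine ⟨(w - v).val, ?_, ?_⟩
    · have h1 : (w - v).val < n := ZMod.val_lt _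
      have h2 : ((w - v).val : ℝ) < (n:ℝ) := by exact_mod_cast h1
      linarith
    · have h1 : v + (((w - v).val : ℕ) : ZMod n) = w := by
        simp [ZMod.natCast_val, ZMod.cast_id]
      rw [h1]
      exact hw.2
end

section
/- Let G be a multigraph of arboricity λ, and suppose an edge-orientation process maintains orientations G_0, G_1, …, where at stage i a maximal set of edge-disjoint length-i directed s–t paths in the auxiliary graph G'_i is found and reversed. Then G'_i has no s–t path of length strictly less than i, and after ℓ = O((log n)/ε) stages, every vertex of G_ℓ has out-degree at most D = ⌈(1+ε)λ⌉. -/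
/-- The source of edge `e` (with endpoints `ends e`) under orientation `o`. -/
def dsrc {V E : Type*} (ends : E → V × V) (o : E → Bool) (e : E) : V :=
  if o e then (ends e).1 else (ends e).2

/-- The target of edge `e` under orientation `o`. -/
def dtgt {V E : Type*} (ends : E → V × V) (o : E → Bool) (e : E) : V :=
  if o e then (ends e).2 else (ends e).1

/-- The out-degree of vertex `v` under orientation `o`. -/
def outdeg {V E : Type*} [Fintype E] [DecidableEq V]
    (ends : E → V × V) (o : E → Bool) (v : V) : ℕ :=
  (Finset.univ.filter (fun e => dsrc ends o e = v)).card

/-- `IsDipath ends o p u v`: the list of edges `p` forms a directed walk from `u` to `v`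
under orientation `o`. -/
def IsDipath {V E : Type*} (ends : E → V × V) (o : E → Bool) : List E → V → V → Prop
  | [], u, v => u = v
  | e :: p, u, v => dsrc ends o e = u ∧ IsDipath ends o p (dtgt ends o e) v

/-- `GoodFamily ends o D i P`: `P` is a set of edge-disjoint directed paths corresponding
to edge-disjoint `s`–`t` paths of length exactly `i` in the auxiliary graph: each `p ∈ P`
has `i − 2` distinct edges, goes from a vertex of out-degree `> D` to one of out-degree
`< D`, the paths are pairwise edge-disjoint, and at most `outdeg(u) − D` paths start at any
`u` (resp. `D − outdeg(v)` end at any `v`), respecting the auxiliary multiplicities. -/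
def GoodFamily {V E : Type*} [Fintype E] [DecidableEq V] [DecidableEq E]
    (ends : E → V × V) (o : E → Bool) (D i : ℕ) (P : Finset (List E)) : Prop :=
  (∀ p ∈ P, p.Nodup ∧ p.length + 2 = i ∧
    ∃ u v : V, IsDipath ends o p u v ∧ D < outdeg ends o u ∧ outdeg ends o v < D) ∧
  (∀ p ∈ P, ∀ q ∈ P, p ≠ q → List.Disjoint p q) ∧
  (∀ u : V, (P.filter (fun p => p.head?.map (dsrc ends o) = some u)).card ≤
    outdeg ends o u - D) ∧
  (∀ v : V, (P.filter (fun p => p.getLast?.map (dtgt ends o) = some v)).card ≤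
    D - outdeg ends o v)

/-!
Reversing a maximal family of edge-disjoint shortest augmenting paths makes every augmenting
path strictly longer. A vertex of excess after the reversal already had excess before it, and
measured by the distance from the old excess vertices, each edge of a new walk adds at most one
while each reversed edge, lying on a shortest augmenting path, subtracts one. A new augmenting
path of length at most `i` would therefore either avoid all reversed edges, contradicting the
maximality of the family, or yield an old augmenting path shorter than `i`.

If after `ℓ` stages a vertex `u` still has out-degree above `D`, no vertex of out-degree below
`D` lies within distance `ℓ - 3` of `u`. The edges leaving a ball around `u` stay in the next
ball, and a set `S` spans at most `λ |S|` edges, so the balls grow by a factor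
`D / λ ≥ 1 + ε` per step. Hence `(1 + ε) ^ (ℓ - 2) ≤ n`, that is, `ℓ = O(log n / ε)`.
-/

open Finset

section Orientation
variable {V E : Type*} {ends : E → V × V} {o o' : E → Bool} {e : E}

lemma dsrc_of_eq (h : o' e = o e) : dsrc ends o' e = dsrc ends o e := by
  simp [dsrc, h]

lemma dtgt_of_eq (h : o' e = o e) : dtgt ends o' e = dtgt ends o e := by
  simp [dtgt, h]

lemma dsrc_of_eq_not (h : o' e = !o e) : dsrc ends o' e = dtgt ends o e := by
  cases hb : o e <;> simp [dsrc, dtgt, h, hb]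

lemma dtgt_of_eq_not (h : o' e = !o e) : dtgt ends o' e = dsrc ends o e := by
  cases hb : o e <;> simp [dsrc, dtgt, h, hb]

lemma dsrc_eq_or_dsrc_eq_dtgt (o o' : E → Bool) (e : E) :
    dsrc ends o' e = dsrc ends o e ∨ dsrc ends o' e = dtgt ends o e := by
  unfold dsrc dtgt
  cases o e <;> cases o' e <;> simp

variable {p q : List E} {u v w : V}

@[simp] lemma isDipath_nil : IsDipath ends o [] u v ↔ u = v := Iff.rfl

@[simp] lemma isDipath_cons :
    IsDipath ends o (e :: p) u v ↔ dsrc ends o e = u ∧ IsDipath ends o p (dtgt ends o e) v :=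
  Iff.rfl

lemma isDipath_append :
    IsDipath ends o (p ++ q) u v ↔ ∃ w, IsDipath ends o p u w ∧ IsDipath ends o q w v := by
  induction p generalizing u with
  | nil => simp
  | cons e p ih => simp [ih, and_assoc]

lemma isDipath_concat : IsDipath ends o (p ++ [e]) u v ↔
    IsDipath ends o p u (dsrc ends o e) ∧ dtgt ends o e = v := by
  simp [isDipath_append, eq_comm]

lemma IsDipath.congr (h : ∀ e ∈ p, o' e = o e) (hp : IsDipath ends o p u v) :
    IsDipath ends o' p u v := by
  induction p generalizing u with
  | nil => exact hp
  | cons e p ih =>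
    rw [isDipath_cons, dsrc_of_eq (h e (by simp)), dtgt_of_eq (h e (by simp))]
    exact ⟨hp.1, ih (fun e' he' => h e' (by simp [he'])) hp.2⟩

lemma IsDipath.ne_nil (hp : IsDipath ends o p u v) (huv : u ≠ v) : p ≠ [] := by
  rintro rfl
  exact huv hp

lemma IsDipath.head?_map_dsrc (hp : IsDipath ends o p u v) (hne : p ≠ []) :
    p.head?.map (dsrc ends o) = some u := by
  cases p with
  | nil => exact absurd rfl hne
  | cons e p => simp [hp.1]

lemma IsDipath.getLast?_map_dtgt (hp : IsDipath ends o p u v) (hne : p ≠ []) :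
    p.getLast?.map (dtgt ends o) = some v := by
  obtain ⟨p, e, rfl⟩ := List.eq_nil_or_concat p |>.resolve_left hne
  rw [List.concat_eq_append] at hp
  simp [(isDipath_concat.1 hp).2]

/-- Cutting out closed sub-walks. -/
lemma IsDipath.exists_nodup (hp : IsDipath ends o p u v) :
    ∃ q : List E, q.Nodup ∧ q.length ≤ p.length ∧ IsDipath ends o q u v := by
  induction p generalizing u with
  | nil => exact ⟨[], List.nodup_nil, le_rfl, hp⟩
  | cons e p ih =>
    obtain ⟨q, hnd, hlen, hq⟩ := ih hp.2
    by_cases he : e ∈ q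
    · obtain ⟨a, b, rfl⟩ := List.append_of_mem he
      obtain ⟨w, -, hb⟩ := isDipath_append.1 hq
      refine ⟨e :: b, hnd.sublist (List.sublist_append_right a _), ?_, hp.1, hb.2⟩
      simp only [List.length_append, List.length_cons] at hlen ⊢
      omega
    · exact ⟨e :: q, List.nodup_cons.2 ⟨he, hnd⟩, by simpa using hlen, hp.1, hq⟩

/-- Flow conservation along a walk. -/
lemma IsDipath.countP_dsrc_add (hp : IsDipath ends o p u w) [DecidableEq V] (v : V) :
    p.countP (dsrc ends o · = v) + (if w = v then 1 else 0) =
      p.countP (dtgt ends o · = v) + (if u = v then 1 else 0) := by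
  induction p generalizing u with
  | nil => cases hp; rfl
  | cons e p ih =>
    have := ih hp.2
    rw [← hp.1]
    simp only [List.countP_cons]
    split_ifs at this ⊢ <;> simp_all

lemma IsDipath.countP_dsrc_add_getLast? (hp : IsDipath ends o p u w) [DecidableEq V] (v : V) :
    p.countP (dsrc ends o · = v) + (if p.getLast?.map (dtgt ends o) = some v then 1 else 0) =
      p.countP (dtgt ends o · = v) + (if p.head?.map (dsrc ends o) = some v then 1 else 0) := by
  rcases eq_or_ne p [] with rfl | hne
  · simp
  · simpa [hp.head?_map_dsrc hne, hp.getLast?_map_dtgt hne] using hp.countP_dsrc_add v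

end Orientation

section Reversal
variable {V E : Type*} [DecidableEq E]

lemma card_filter_biUnion_toFinset {P : Finset (List E)} (hnd : ∀ p ∈ P, p.Nodup)
    (hdisj : ∀ p ∈ P, ∀ q ∈ P, p ≠ q → List.Disjoint p q) (r : E → Prop)
    [DecidablePred r] : #{e ∈ P.biUnion List.toFinset | r e} = ∑ p ∈ P, p.countP (r ·) := by
  rw [filter_biUnion, card_biUnion]
  · refine sum_congr rfl fun p hp => ?_
    have : {e ∈ p.toFinset | r e} = (p.filter (r ·)).toFinset := by ext; simp
    rw [this, List.toFinset_card_of_nodup ((hnd p hp).filter _), List.countP_eq_length_filter]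
  · intro p hp q hq hpq
    simp only [Function.onFun, disjoint_left, mem_filter, List.mem_toFinset]
    exact fun e he he' => hdisj p hp q hq hpq he.1 he'.1

variable [Fintype E] [DecidableEq V] {ends : E → V × V} {o : E → Bool}

def reverseAlong (P : Finset (List E)) (o : E → Bool) : E → Bool :=
  fun e => if ∃ p ∈ P, e ∈ p then !o e else o e

lemma outdeg_reverse_add (F : Finset E) (v : V) :
    outdeg ends (fun e => if e ∈ F then !o e else o e) v + #{e ∈ F | dsrc ends o e = v} =
      outdeg ends o v + #{e ∈ F | dtgt ends o e = v} := by
  set o' : E → Bool := fun e => if e ∈ F then !o e else o e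
  have hF : ∑ e ∈ F, (if dsrc ends o' e = v then 1 else 0) =
      ∑ e ∈ F, if dtgt ends o e = v then 1 else 0 :=
    sum_congr rfl fun e he => by rw [dsrc_of_eq_not (o' := o') (if_pos he)]
  have hFc : ∑ e ∈ Fᶜ, (if dsrc ends o' e = v then 1 else 0) =
      ∑ e ∈ Fᶜ, if dsrc ends o e = v then 1 else 0 :=
    sum_congr rfl fun e he => by rw [dsrc_of_eq (o' := o') (if_neg (mem_compl.1 he))]
  simp only [outdeg, card_filter]
  rw [← sum_add_sum_compl F,
    ← sum_add_sum_compl F (fun e => if dsrc ends o e = v then 1 else 0), hF, hFc]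
  ring

lemma outdeg_reverseAlong_add {P : Finset (List E)} (hnd : ∀ p ∈ P, p.Nodup)
    (hdisj : ∀ p ∈ P, ∀ q ∈ P, p ≠ q → List.Disjoint p q)
    (hwalk : ∀ p ∈ P, ∃ u w, IsDipath ends o p u w) (v : V) :
    outdeg ends (reverseAlong P o) v + #{p ∈ P | p.head?.map (dsrc ends o) = some v} =
      outdeg ends o v + #{p ∈ P | p.getLast?.map (dtgt ends o) = some v} := by
  have hrev : reverseAlong P o = fun e => if e ∈ P.biUnion List.toFinset then !o e else o e := by
    funext e
    simp [reverseAlong]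
  have hflow : ∑ p ∈ P, p.countP (dsrc ends o · = v) +
        #{p ∈ P | p.getLast?.map (dtgt ends o) = some v} =
      ∑ p ∈ P, p.countP (dtgt ends o · = v) +
        #{p ∈ P | p.head?.map (dsrc ends o) = some v} := by
    simp only [card_filter, ← sum_add_distrib]
    refine sum_congr rfl fun p hp => ?_
    obtain ⟨u, w, hp⟩ := hwalk p hp
    exact hp.countP_dsrc_add_getLast? v
  have := outdeg_reverse_add (ends := ends) (o := o) (P.biUnion List.toFinset) v
  rw [card_filter_biUnion_toFinset hnd hdisj, card_filter_biUnion_toFinset hnd hdisj] at this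
  rw [hrev]
  omega

end Reversal

namespace GoodFamily
variable {V E : Type*} [Fintype E] [DecidableEq V] [DecidableEq E] {ends : E → V × V}
  {o : E → Bool} {D i : ℕ} {P : Finset (List E)} {u v : V}

lemma outdeg_reverseAlong_add (hP : GoodFamily ends o D i P) (v : V) :
    outdeg ends (reverseAlong P o) v + #{p ∈ P | p.head?.map (dsrc ends o) = some v} =
      outdeg ends o v + #{p ∈ P | p.getLast?.map (dtgt ends o) = some v} :=
  _root_.outdeg_reverseAlong_add (fun p hp => (hP.1 p hp).1) hP.2.1
    (fun p hp => by obtain ⟨-, -, u, w, hpw, -⟩ := hP.1 p hp; exact ⟨u, w, hpw⟩) v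

/-- An excess vertex after the reversal was one before it, with room for one more path. -/
lemma card_start_add_lt (hP : GoodFamily ends o D i P)
    (hu : D < outdeg ends (reverseAlong P o) u) :
    #{p ∈ P | p.head?.map (dsrc ends o) = some u} + D < outdeg ends o u := by
  have := hP.outdeg_reverseAlong_add u
  have := hP.2.2.1 u
  have := hP.2.2.2 u
  omega

lemma outdeg_add_card_end_lt (hP : GoodFamily ends o D i P)
    (hv : outdeg ends (reverseAlong P o) v < D) :
    outdeg ends o v + #{p ∈ P | p.getLast?.map (dtgt ends o) = some v} < D := by
  have := hP.outdeg_reverseAlong_add v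
  have := hP.2.2.1 v
  have := hP.2.2.2 v
  omega

lemma insert {p : List E} (hP : GoodFamily ends o D i P) (hnd : p.Nodup)
    (hlen : p.length + 2 = i) (hp : IsDipath ends o p u v)
    (hu : #{p ∈ P | p.head?.map (dsrc ends o) = some u} + D < outdeg ends o u)
    (hv : outdeg ends o v + #{p ∈ P | p.getLast?.map (dtgt ends o) = some v} < D)
    (hdisj : ∀ q ∈ P, List.Disjoint p q) :
    GoodFamily ends o D i (insert p P) := by
  have hne : p ≠ [] := hp.ne_nil fun huv => by subst huv; omega
  refine ⟨?_, ?_, fun w => ?_, fun w => ?_⟩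
  · simp only [mem_insert, forall_eq_or_imp]
    exact ⟨⟨hnd, hlen, u, v, hp, by omega, by omega⟩, hP.1⟩
  · simp only [mem_insert, forall_eq_or_imp]
    exact ⟨⟨fun h => absurd rfl h, fun q hq _ => hdisj q hq⟩,
      fun q hq => ⟨fun _ => (hdisj q hq).symm, hP.2.1 q hq⟩⟩
  · rw [filter_insert]
    split_ifs with h
    · rw [hp.head?_map_dsrc hne, Option.some_inj] at h
      subst h
      have := card_insert_le p {q ∈ P | q.head?.map (dsrc ends o) = some u}
      omega
    · exact hP.2.2.1 w
  · rw [filter_insert]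
    split_ifs with h
    · rw [hp.getLast?_map_dtgt hne, Option.some_inj] at h
      subst h
      have := card_insert_le p {q ∈ P | q.getLast?.map (dtgt ends o) = some v}
      omega
    · exact hP.2.2.2 w

end GoodFamily

section Blocking
variable {V E : Type*} [Fintype E] [DecidableEq V] {ends : E → V × V}
  {o : E → Bool} {D i k : ℕ} {e : E} {u v x y : V}

/-- A walk from `u` to `v` corresponds to the `s`–`t` path `s, u, …, v, t` of length
`p.length + 2` in the auxiliary graph. -/
def NoAugmentingPathShorterThan (ends : E → V × V) (o : E → Bool) (D i : ℕ) : Prop :=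
  ∀ (p : List E) (u v : V), IsDipath ends o p u v → D < outdeg ends o u →
    outdeg ends o v < D → i ≤ p.length + 2

def ExcessReach (ends : E → V × V) (o : E → Bool) (D k : ℕ) (w : V) : Prop :=
  ∃ (q : List E) (u : V), D < outdeg ends o u ∧ IsDipath ends o q u w ∧ q.length ≤ k

lemma ExcessReach.dtgt (hr : ExcessReach ends o D k (dsrc ends o e)) :
    ExcessReach ends o D (k + 1) (dtgt ends o e) := by
  obtain ⟨q, u, hu, hq, hlen⟩ := hr
  exact ⟨q ++ [e], u, hu, isDipath_concat.2 ⟨hq, rfl⟩, by simpa using hlen⟩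

namespace NoAugmentingPathShorterThan

lemma le_of_excessReach (h : NoAugmentingPathShorterThan ends o D i)
    (hr : ExcessReach ends o D k v) (hv : outdeg ends o v < D) : i ≤ k + 2 := by
  obtain ⟨q, u, hu, hq, hlen⟩ := hr
  have := h q u v hq hu hv
  omega

variable [DecidableEq E] {P : Finset (List E)}

/-- The paths of `P` are shortest augmenting paths, so going backwards along one of their
edges brings us one step closer to the excess vertices. -/
lemma excessReach_dsrc_of_mem (h : NoAugmentingPathShorterThan ends o D i)
    (hP : GoodFamily ends o D i P) {q : List E} (hq : q ∈ P) (he : e ∈ q)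
    (hr : ExcessReach ends o D k (dtgt ends o e)) :
    1 ≤ k ∧ ExcessReach ends o D (k - 1) (dsrc ends o e) := by
  obtain ⟨-, hlen, u, w, hqw, hu, hw⟩ := hP.1 q hq
  obtain ⟨a, b, rfl⟩ := List.append_of_mem he
  obtain ⟨x, ha, hx, hb⟩ := isDipath_append.1 hqw
  obtain ⟨r, u₀, hu₀, hr, hrlen⟩ := hr
  have := h (r ++ b) u₀ w (isDipath_append.2 ⟨_, hr, hb⟩) hu₀ hw
  simp only [List.length_append, List.length_cons] at this hlen
  exact ⟨by omega, a, u, hu, hx ▸ ha, by omega⟩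

/-- Along a walk of the reversed orientation the distance from the excess vertices grows by
at most one per edge, and drops by at least one on each reversed edge. -/
lemma excessReach_of_isDipath_reverseAlong (h : NoAugmentingPathShorterThan ends o D i)
    (hP : GoodFamily ends o D i P) {p : List E} (hp : IsDipath ends (reverseAlong P o) p x y)
    (hr : ExcessReach ends o D k x) :
    ∃ m, m + 2 * p.countP (fun e => ∃ q ∈ P, e ∈ q) ≤ k + p.length ∧
      ExcessReach ends o D m y := by
  induction p generalizing x k with
  | nil => exact ⟨k, by simp, (isDipath_nil.1 hp) ▸ hr⟩
  | cons e p ih =>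
    obtain ⟨rfl, hp⟩ := hp
    by_cases he : ∃ q ∈ P, e ∈ q
    · have hrev : reverseAlong P o e = !o e := if_pos he
      obtain ⟨q, hq, heq⟩ := id he
      rw [dsrc_of_eq_not hrev] at hr
      obtain ⟨hk, hr⟩ := h.excessReach_dsrc_of_mem hP hq heq hr
      obtain ⟨m, hm, hr⟩ := ih hp (dtgt_of_eq_not hrev ▸ hr)
      refine ⟨m, ?_, hr⟩
      simp only [List.countP_cons, List.length_cons, he, decide_true, if_true]
      omega
    · have hkeep : reverseAlong P o e = o e := if_neg he
      rw [dsrc_of_eq hkeep] at hr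
      obtain ⟨m, hm, hr⟩ := ih hp (dtgt_of_eq hkeep ▸ hr.dtgt)
      refine ⟨m, ?_, hr⟩
      simp only [List.countP_cons, List.length_cons, he, decide_false, Bool.false_eq_true,
        if_false]
      omega

theorem reverseAlong (h : NoAugmentingPathShorterThan ends o D i)
    (hP : GoodFamily ends o D i P)
    (hmax : ∀ p ∉ P, GoodFamily ends o D i (insert p P) → False) :
    NoAugmentingPathShorterThan ends (reverseAlong P o) D (i + 1) := by
  intro p u v hp hu hv
  by_contra! hshort
  obtain ⟨q, hnd, hqlen, hq⟩ := hp.exists_nodup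
  have hu' := hP.card_start_add_lt hu
  have hv' := hP.outdeg_add_card_end_lt hv
  obtain ⟨m, hm, hr⟩ :=
    h.excessReach_of_isDipath_reverseAlong (k := 0) hP hq ⟨[], u, by omega, rfl, le_rfl⟩
  have hi := h.le_of_excessReach hr (by omega)
  have hkeep : ∀ e ∈ q, ¬∃ r ∈ P, e ∈ r := by
    simpa using (by omega : q.countP (fun e => ∃ r ∈ P, e ∈ r) = 0)
  have hqo : IsDipath ends o q u v := hq.congr fun e he => (if_neg (hkeep e he)).symm
  have hdisj : ∀ r ∈ P, List.Disjoint q r := fun r hr e heq her => hkeep e heq ⟨r, hr, her⟩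
  have hqP : q ∉ P := fun hqP => by
    obtain ⟨e, he⟩ := List.exists_mem_of_ne_nil q (hqo.ne_nil fun huv => by subst huv; omega)
    exact hdisj q hqP he he
  have hlen : q.length + 2 = i := by
    have := h q u v hqo (by omega) (by omega)
    omega
  exact hmax q hqP (hP.insert hnd hlen hqo hu' hv' hdisj)

end NoAugmentingPathShorterThan

end Blocking

section Growth
variable {V E : Type*} [Fintype E] [DecidableEq V] {ends : E → V × V}
  {τ σ : E → Bool} {D lam k m ℓ : ℕ} {u w : V}

def outBall (ends : E → V × V) (τ : E → Bool) (u : V) : ℕ → Finset V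
  | 0 => {u}
  | k + 1 => outBall ends τ u k ∪
      ({e | dsrc ends τ e ∈ outBall ends τ u k} : Finset E).image (dtgt ends τ)

lemma mem_outBall_self : ∀ k, u ∈ outBall ends τ u k
  | 0 => mem_singleton_self u
  | k + 1 => mem_union_left _ (mem_outBall_self k)

lemma outBall_mono : outBall ends τ u k ⊆ outBall ends τ u (k + 1) := subset_union_left

lemma dtgt_mem_outBall {e : E} (he : dsrc ends τ e ∈ outBall ends τ u k) :
    dtgt ends τ e ∈ outBall ends τ u (k + 1) :=
  mem_union_right _ (mem_image_of_mem _ (by simpa using he))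

lemma exists_isDipath_of_mem_outBall (hw : w ∈ outBall ends τ u k) :
    ∃ p : List E, IsDipath ends τ p u w ∧ p.length ≤ k := by
  induction k generalizing w with
  | zero => exact ⟨[], (mem_singleton.1 hw).symm, le_rfl⟩
  | succ k ih =>
    rcases mem_union.1 hw with hw | hw
    · obtain ⟨p, hp, hlen⟩ := ih hw
      exact ⟨p, hp, by omega⟩
    · obtain ⟨e, he, rfl⟩ := mem_image.1 hw
      obtain ⟨p, hp, hlen⟩ := ih (mem_filter.1 he).2
      exact ⟨p ++ [e], isDipath_concat.2 ⟨hp, rfl⟩, by simpa using hlen⟩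

/-- Each such edge is counted at its `σ`-source, which lies in `S`. -/
lemma card_edges_within_le (hσ : ∀ v, outdeg ends σ v ≤ lam) (S : Finset V) :
    #{e | dsrc ends τ e ∈ S ∧ dtgt ends τ e ∈ S} ≤ lam * #S := by
  refine card_le_mul_card_image_of_maps_to (f := dsrc ends σ) (fun e he => ?_) lam
    fun v _ => (card_le_card fun e he => ?_).trans (hσ v)
  · obtain ⟨hs, ht⟩ := (mem_filter.1 he).2
    rcases dsrc_eq_or_dsrc_eq_dtgt τ σ e with h | h <;> rw [h] <;> assumption
  · simp only [mem_filter, mem_univ, true_and] at he ⊢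
    exact he.2

lemma sum_outdeg_eq_card (S : Finset V) :
    ∑ v ∈ S, outdeg ends τ v = #{e | dsrc ends τ e ∈ S} := by
  rw [card_eq_sum_card_fiberwise (s := {e | dsrc ends τ e ∈ S}) (t := S) (f := dsrc ends τ)
    fun e he => by simpa using he]
  refine sum_congr rfl fun v hv => congrArg card ?_
  ext e
  simp only [mem_filter, mem_univ, true_and]
  exact ⟨fun h => ⟨h ▸ hv, h⟩, And.right⟩

/-- The edges leaving the ball of radius `k` stay inside the ball of radius `k + 1`. -/
lemma mul_card_outBall_lt (hσ : ∀ v, outdeg ends σ v ≤ lam) (hu : D < outdeg ends τ u)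
    (hD : ∀ w ∈ outBall ends τ u k, D ≤ outdeg ends τ w) :
    D * #(outBall ends τ u k) < lam * #(outBall ends τ u (k + 1)) := calc
  D * #(outBall ends τ u k) = ∑ _ ∈ outBall ends τ u k, D := by
    rw [sum_const, smul_eq_mul, mul_comm]
  _ < ∑ w ∈ outBall ends τ u k, outdeg ends τ w :=
    sum_lt_sum hD ⟨u, mem_outBall_self k, hu⟩
  _ = #{e | dsrc ends τ e ∈ outBall ends τ u k} := sum_outdeg_eq_card _
  _ ≤ #{e | dsrc ends τ e ∈ outBall ends τ u (k + 1) ∧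
        dtgt ends τ e ∈ outBall ends τ u (k + 1)} :=
    card_le_card fun e he => by
      simp only [mem_filter, mem_univ, true_and] at he ⊢
      exact ⟨outBall_mono he, dtgt_mem_outBall he⟩
  _ ≤ lam * #(outBall ends τ u (k + 1)) := card_edges_within_le hσ _

lemma one_add_pow_le_card_outBall {ε : ℝ} (hε : 0 ≤ ε) (hD : (1 + ε) * lam ≤ D)
    (hσ : ∀ v, outdeg ends σ v ≤ lam) (hu : D < outdeg ends τ u)
    (hall : ∀ k < m, ∀ w ∈ outBall ends τ u k, D ≤ outdeg ends τ w) :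
    (1 + ε) ^ m ≤ #(outBall ends τ u m) := by
  induction m with
  | zero => simp [outBall]
  | succ m ih =>
    have hlt := mul_card_outBall_lt hσ hu (hall m m.lt_succ_self)
    have hlam : (0 : ℝ) < lam := by
      exact_mod_cast Nat.pos_of_ne_zero fun h => by simp [h] at hlt
    have hstep : (1 + ε) * #(outBall ends τ u m) ≤ #(outBall ends τ u (m + 1)) := by
      have : (D : ℝ) * #(outBall ends τ u m) < lam * #(outBall ends τ u (m + 1)) := by
        exact_mod_cast hlt
      refine le_of_mul_le_mul_left ?_ hlam
      nlinarith [(#(outBall ends τ u m)).cast_nonneg (α := ℝ)]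
    calc (1 + ε) ^ (m + 1) = (1 + ε) * (1 + ε) ^ m := pow_succ' _ _
      _ ≤ (1 + ε) * #(outBall ends τ u m) :=
        mul_le_mul_of_nonneg_left (ih fun k hk => hall k (hk.trans m.lt_succ_self)) (by linarith)
      _ ≤ _ := hstep

lemma NoAugmentingPathShorterThan.le_outdeg_of_mem_outBall
    (h : NoAugmentingPathShorterThan ends τ D ℓ) (hu : D < outdeg ends τ u) (hk : k + 2 < ℓ)
    (hw : w ∈ outBall ends τ u k) : D ≤ outdeg ends τ w := by
  by_contra! hw'
  obtain ⟨p, hp, hlen⟩ := exists_isDipath_of_mem_outBall hw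
  have := h p u w hp hu hw'
  omega

end Growth

lemma mul_le_two_mul_log_of_one_add_pow_le {ε x : ℝ} (hε : 0 < ε) (hε1 : ε ≤ 1) {m : ℕ}
    (h : (1 + ε) ^ m ≤ x) : m * ε ≤ 2 * Real.log x := by
  have hlog : m * Real.log (1 + ε) ≤ Real.log x := by
    rw [← Real.log_pow]
    exact Real.log_le_log (by positivity) h
  have hinv : ε / 2 ≤ 1 - (1 + ε)⁻¹ := by
    rw [le_sub_iff_add_le, ← le_sub_iff_add_le', inv_le_iff_one_le_mul₀ (by linarith)]
    nlinarith
  have := Real.one_sub_inv_le_log_of_pos (by linarith : 0 < 1 + ε)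
  nlinarith [(Nat.cast_nonneg m : (0 : ℝ) ≤ m)]

/-- Ghaffari–Su augmentation process (blocking paths) for approximate Nash-Williams
edge-orientation.  Suppose the multigraph `(V, E, ends)` has an orientation of maximum
out-degree `λ` (arboricity `λ`), `D = ⌈(1+ε)λ⌉`, and at each stage `i` a maximal family
`P i` of edge-disjoint length-`i` `s`–`t` paths of the auxiliary graph is reversed.  Then
no stage-`i` auxiliary graph has an `s`–`t` path of length `< i`, and after
`ℓ = O((log n)/ε)` stages every out-degree is at most `D`. -/
theorem stmt18 : ∃ C : ℝ, 0 < C ∧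
    ∀ (V E : Type) [Fintype V] [Fintype E] [DecidableEq V] [DecidableEq E],
    ∀ (ends : E → V × V) (lam : ℕ) (ε : ℝ) (o : ℕ → E → Bool) (P : ℕ → Finset (List E)),
      0 < ε → ε ≤ 1 →
      (∃ σ : E → Bool, ∀ v : V, outdeg ends σ v ≤ lam) →
      (∀ i : ℕ, GoodFamily ends (o i) (Nat.ceil ((1 + ε) * lam)) i (P i)) →
      (∀ i : ℕ, ∀ p : List E, p ∉ P i →
        GoodFamily ends (o i) (Nat.ceil ((1 + ε) * lam)) i (insert p (P i)) → False) →
      (∀ i : ℕ, o (i + 1) = fun e => if ∃ p ∈ P i, e ∈ p then !(o i e) else o i e) →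
      (∀ i : ℕ, ∀ (p : List E) (u v : V), IsDipath ends (o i) p u v →
        Nat.ceil ((1 + ε) * lam) < outdeg ends (o i) u →
        outdeg ends (o i) v < Nat.ceil ((1 + ε) * lam) →
        p.length + 2 < i → False) ∧
      (∀ ℓ : ℕ, C * Real.log (Fintype.card V : ℝ) / ε ≤ (ℓ : ℝ) →
        ∀ v : V, outdeg ends (o ℓ) v ≤ Nat.ceil ((1 + ε) * lam)) := by
  refine ⟨10, by norm_num, fun V E _ _ _ _ ends lam ε o P hε hε1 ⟨σ, hσ⟩ hP hmax hupd => ?_⟩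
  set D := ⌈(1 + ε) * lam⌉₊
  have hshort : ∀ i, NoAugmentingPathShorterThan ends (o i) D i := by
    intro i
    induction i with
    | zero => exact fun _ _ _ _ _ _ => Nat.zero_le _
    | succ i ih => rw [hupd i]; exact ih.reverseAlong (hP i) (hmax i)
  refine ⟨fun i p u v hp hu hv => (hshort i p u v hp hu hv).not_gt, fun ℓ hℓ u => ?_⟩
  by_contra! hu
  have hcard {m : ℕ} (hm : ∀ k < m, ∀ w ∈ outBall ends (o ℓ) u k, D ≤ outdeg ends (o ℓ) w) :
      (1 + ε) ^ m ≤ Fintype.card V :=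
    (one_add_pow_le_card_outBall hε.le (Nat.le_ceil _) hσ hu hm).trans
      (by exact_mod_cast card_le_univ _)
  have hn : (2 : ℝ) ≤ Fintype.card V := by
    have := hcard (m := 1) fun k hk w hw => by
      obtain rfl := Nat.lt_one_iff.1 hk
      obtain rfl := mem_singleton.1 hw
      exact hu.le
    exact_mod_cast (Nat.one_lt_cast (α := ℝ)).1 (by linarith [pow_one (1 + ε)])
  have hlog := mul_le_two_mul_log_of_one_add_pow_le hε hε1
    (hcard (m := ℓ - 2) fun k hk w => (hshort ℓ).le_outdeg_of_mem_outBall hu (by omega))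
  have hlog2 : 1 / 2 < Real.log (Fintype.card V) :=
    lt_of_lt_of_le (by linarith [Real.log_two_gt_d9]) (Real.log_le_log (by norm_num) hn)
  have hℓ2 : (ℓ : ℝ) ≤ (ℓ - 2 : ℕ) + 2 := by exact_mod_cast (by omega : ℓ ≤ ℓ - 2 + 2)
  rw [div_le_iff₀ hε] at hℓ
  -- `10 log n ≤ ε ℓ ≤ 2 log n + 2 ε`, impossible when `log n > 1 / 2`
  nlinarith
end

section
/- Let G'_i be the auxiliary graph at stage i of the edge-orientation augmentation process on an n-vertex graph with m ≤ nλ edges, and suppose G'_i has no s–t directed path of length strictly less than i. Then every s–t directed path of length exactly i in G'_i contains at most one vertex of out-degree exceeding D, and consequently the number of s–t directed paths of length i in G'_i is at most n^3·(2λ)^i, where D = ⌈(1+ε)λ⌉ ≤ 2λ. -/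
lemma isDipath_suffix {V E : Type*} (ends : E → V × V) (o : E → Bool) :
    ∀ (p : List E) (u v : V), IsDipath ends o p u v →
    ∀ (f : E) (t : List E), (f :: t) <:+ p →
    IsDipath ends o (f :: t) (dsrc ends o f) v := by
  intro p
  induction p with
  | nil =>
    intro u v h f t hsuf
    exact absurd (List.eq_nil_of_suffix_nil hsuf) (by simp)
  | cons e p' ih =>
    intro u v h f t hsuf
    rcases List.suffix_cons_iff.mp hsuf with heq | hsuf'
    · injection heq with h1 h2
      subst h1; subst h2
      exact ⟨rfl, h.2⟩
    · exact ih _ _ h.2 f t hsuf'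

/-- Finsets of directed walks of length `ℓ` from `w` all of whose edge sources have
out-degree at most `D`. -/
def walks {V E : Type*} [Fintype E] [DecidableEq V] [DecidableEq E]
    (ends : E → V × V) (o : E → Bool) (D : ℕ) : ℕ → V → Finset (List E)
  | 0, _ => {[]}
  | (ℓ + 1), w =>
    (Finset.univ.filter (fun e => dsrc ends o e = w ∧
        outdeg ends o (dsrc ends o e) ≤ D)).biUnion
      (fun e => (walks ends o D ℓ (dtgt ends o e)).image (e :: ·))

lemma walks_card_le {V E : Type*} [Fintype E] [DecidableEq V] [DecidableEq E]
    (ends : E → V × V) (o : E → Bool) (D : ℕ) :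
    ∀ (ℓ : ℕ) (w : V), (walks ends o D ℓ w).card ≤ D ^ ℓ := by
  intro ℓ
  induction ℓ with
  | zero => intro w; simp [walks]
  | succ ℓ ih =>
    intro w
    refine le_trans Finset.card_biUnion_le ?_
    refine le_trans (Finset.sum_le_sum
      (fun e _ => le_trans Finset.card_image_le (ih (dtgt ends o e)))) ?_
    rw [Finset.sum_const, smul_eq_mul]
    have hcard : (Finset.univ.filter (fun e => dsrc ends o e = w ∧
        outdeg ends o (dsrc ends o e) ≤ D)).card ≤ D := by
      by_cases h : outdeg ends o w ≤ D
      · refine le_trans (Finset.card_le_card ?_) h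
        intro e he
        simp only [Finset.mem_filter] at he ⊢
        exact ⟨he.1, he.2.1⟩
      · have : (Finset.univ.filter (fun e => dsrc ends o e = w ∧
            outdeg ends o (dsrc ends o e) ≤ D)) = ∅ := by
          refine Finset.filter_false_of_mem ?_
          intro e _
          rintro ⟨he1, he2⟩
          rw [he1] at he2
          exact h he2
        rw [this]
        simp
    calc (Finset.univ.filter (fun e => dsrc ends o e = w ∧
          outdeg ends o (dsrc ends o e) ≤ D)).card * D ^ ℓ
        ≤ D * D ^ ℓ := Nat.mul_le_mul_right _ hcard
      _ = D ^ (ℓ + 1) := by rw [pow_succ, mul_comm]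

lemma mem_walks {V E : Type*} [Fintype E] [DecidableEq V] [DecidableEq E]
    (ends : E → V × V) (o : E → Bool) (D : ℕ) :
    ∀ (q : List E) (w v : V), IsDipath ends o q w v →
    (∀ f ∈ q, outdeg ends o (dsrc ends o f) ≤ D) → q ∈ walks ends o D q.length w := by
  intro q
  induction q with
  | nil => intro w v h _; simp [walks]
  | cons e q' ih =>
    intro w v h hall
    simp only [List.length_cons, walks, Finset.mem_biUnion, Finset.mem_filter,
      Finset.mem_image]
    exact ⟨e, ⟨Finset.mem_univ e, h.1, hall e (by simp)⟩, q',
      ih _ v h.2 (fun f hf => hall f (by simp [hf])), rfl⟩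

/-- Path counting in the auxiliary graph.  If the auxiliary graph at stage `i` has no
`s`–`t` path of length `< i`, the graph has `n` vertices and at most `n·λ` edges, and
`D = ⌈(1+ε)λ⌉ ≤ 2λ`, then every `s`–`t` path of length exactly `i` contains at most one
vertex of out-degree exceeding `D`, and the number of `s`–`t` paths of length exactly `i`
is at most `n^3·(2λ)^i`. -/
theorem stmt19 {V E : Type*} [Fintype V] [Fintype E] [DecidableEq V] [DecidableEq E]
    (ends : E → V × V) (o : E → Bool) (lam D i n : ℕ) (ε : ℝ)
    (hn : n = Fintype.card V) (hm : Fintype.card E ≤ n * lam)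
    (hε0 : 0 < ε) (hε1 : ε ≤ 1)
    (hD : D = Nat.ceil ((1 + ε) * lam)) (hD2 : D ≤ 2 * lam)
    (hshort : ∀ (p : List E) (u v : V), IsDipath ends o p u v →
      D < outdeg ends o u → outdeg ends o v < D → p.length + 2 < i → False) :
    (∀ (p : List E) (u v : V), IsDipath ends o p u v → D < outdeg ends o u →
      outdeg ends o v < D → p.length + 2 = i →
      ((u :: p.map (dtgt ends o)).toFinset.filter
        (fun w => D < outdeg ends o w)).card ≤ 1) ∧
    Set.ncard {p : List E | ∃ u v : V, IsDipath ends o p u v ∧ D < outdeg ends o u ∧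
      outdeg ends o v < D ∧ p.length + 2 = i} ≤ n ^ 3 * (2 * lam) ^ i := by
  constructor
  · -- Part 1: at most one high-out-degree vertex on any s-t path of length i
    intro p u v hdip hu hv hlen
    have hsub : ((u :: p.map (dtgt ends o)).toFinset.filter
        (fun w => D < outdeg ends o w)) ⊆ {u} := by
      intro w hw
      simp only [Finset.mem_filter, List.toFinset_cons, Finset.mem_insert,
        List.mem_toFinset, List.mem_map] at hw
      rcases hw.1 with rfl | ⟨e, he, rfl⟩
      · exact Finset.mem_singleton_self w
      · exfalso
        obtain ⟨s, t, rfl⟩ := List.append_of_mem he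
        have hsuf : (e :: t) <:+ s ++ e :: t := List.suffix_append s (e :: t)
        have hd := isDipath_suffix ends o _ u v hdip e t hsuf
        have hlt : t.length + 2 < i := by
          have h1 := hsuf.length_le
          simp only [List.length_cons, List.length_append] at h1 hlen
          omega
        exact hshort t _ v hd.2 hw.2 hv hlt
    exact le_trans (Finset.card_le_card hsub) (le_of_eq (Finset.card_singleton u))
  · -- Part 2: counting
    set S := {p : List E | ∃ u v : V, IsDipath ends o p u v ∧ D < outdeg ends o u ∧
      outdeg ends o v < D ∧ p.length + 2 = i} with hSdef
    rcases S.eq_empty_or_nonempty with hS | ⟨p₀, hp₀⟩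
    · simp [hS]
    obtain ⟨u₀, v₀, hdip₀, hu₀, hv₀, hlen₀⟩ := hp₀
    have hp₀ne : p₀ ≠ [] := by
      rintro rfl
      have : u₀ = v₀ := hdip₀
      subst this
      omega
    obtain ⟨e₀, q₀, rfl⟩ : ∃ e q, p₀ = e :: q := by
      cases p₀ with
      | nil => exact absurd rfl hp₀ne
      | cons e q => exact ⟨e, q, rfl⟩
    have hi : 3 ≤ i := by
      simp only [List.length_cons] at hlen₀; omega
    have hE1 : 1 ≤ Fintype.card E := Fintype.card_pos_iff.mpr ⟨e₀⟩
    have hnlam : 1 ≤ n * lam := le_trans hE1 hm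
    have hn1 : 1 ≤ n := by
      rcases Nat.eq_zero_or_pos n with h | h
      · subst h; simp at hnlam
      · exact h
    have hlam1 : 1 ≤ lam := by
      rcases Nat.eq_zero_or_pos lam with h | h
      · subst h; simp at hnlam
      · exact h
    set k := i - 3 with hk
    set T := Finset.univ.biUnion
      (fun e : E => (walks ends o D k (dtgt ends o e)).image (e :: ·)) with hT
    have hsub : S ⊆ ↑T := by
      rintro p ⟨u, v, hdip, hu, hv, hlen⟩
      obtain ⟨e, q, rfl⟩ : ∃ e q, p = e :: q := by
        cases p with
        | nil =>
          exfalso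
          have : u = v := hdip
          subst this
          omega
        | cons e q => exact ⟨e, q, rfl⟩
      have hqlen : q.length = k := by
        simp only [List.length_cons] at hlen; omega
      have hall : ∀ f ∈ q, outdeg ends o (dsrc ends o f) ≤ D := by
        intro f hf
        by_contra h
        push_neg at h
        obtain ⟨s, t, rfl⟩ := List.append_of_mem hf
        have hsuf : (f :: t) <:+ e :: (s ++ f :: t) :=
          (List.suffix_append s (f :: t)).trans (List.suffix_cons e _)
        have hd := isDipath_suffix ends o _ u v hdip f t hsuf
        have hlt : (f :: t).length + 2 < i := by
          simp only [List.length_cons, List.length_append] at hlen ⊢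
          omega
        exact hshort (f :: t) _ v hd h hv hlt
      refine Finset.mem_coe.mpr (Finset.mem_biUnion.mpr ⟨e, Finset.mem_univ e,
        Finset.mem_image.mpr ⟨q, ?_, rfl⟩⟩)
      exact hqlen ▸ mem_walks ends o D q _ v hdip.2 hall
    have h2l : 1 ≤ 2 * lam := by omega
    calc S.ncard ≤ T.card := by
          rw [← Set.ncard_coe_finset]
          exact Set.ncard_le_ncard hsub T.finite_toSet
      _ ≤ ∑ _e : E, D ^ k :=
          le_trans Finset.card_biUnion_le (Finset.sum_le_sum
            (fun e _ => le_trans Finset.card_image_le (walks_card_le ends o D k _)))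
      _ = Fintype.card E * D ^ k := by
          rw [Finset.sum_const, smul_eq_mul, Finset.card_univ]
      _ ≤ (n * lam) * (2 * lam) ^ k :=
          Nat.mul_le_mul hm (Nat.pow_le_pow_left hD2 k)
      _ = n * ((2 * lam) ^ k * lam) := by ring
      _ ≤ n * ((2 * lam) ^ k * (2 * lam)) := by
          refine Nat.mul_le_mul_left n (Nat.mul_le_mul_left _ (by omega))
      _ = n * (2 * lam) ^ (k + 1) := by rw [pow_succ]
      _ ≤ n ^ 3 * (2 * lam) ^ i := by
          refine Nat.mul_le_mul ?_ (Nat.pow_le_pow_right h2l (by omega))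
          calc n = n ^ 1 := (pow_one n).symm
            _ ≤ n ^ 3 := Nat.pow_le_pow_right hn1 (by omega)
end
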